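/- arXiv:2003.03249 — 8 statements merged into one kernel-verified Lean document; each statement's English description precedes it below -/
import Mathlib

section
/- The system of deterministic Volterra integral equations S(t) = 1 - I0 - λ∫₀ᵗ S(s)I(s) ds and I(t) = I0·F₀ᶜ(t) + λ∫₀ᵗ Fᶜ(t−s) S(s)I(s) ds has at most one solution pair (S, I) of functions [0,T] → ℝ with 0 ≤ S(t) ≤ 1 and 0 ≤ I(t) ≤ 1 for all t. -/
open MeasureTheory Set Filter Topology

lemma intervalIntegrable_of_bdd' {f : ℝ → ℝ} {a b C : ℝ} (hf : Measurable f)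
    (h : ∀ x ∈ Set.uIcc a b, |f x| ≤ C) : IntervalIntegrable f volume a b := by
  rw [intervalIntegrable_iff]
  apply Measure.integrableOn_of_bounded (M := C)
  · exact (measure_Ioc_lt_top).ne
  · exact hf.aestronglyMeasurable
  · filter_upwards [ae_restrict_mem measurableSet_uIoc] with x hx
    exact h x (uIoc_subset_uIcc hx)

/-- Uniqueness of solutions to the SIR fluid Volterra integral equations. -/
theorem sir_fluid_uniqueness
    (T lam I0 : ℝ) (hT : 0 < T) (hlam : 0 < lam) (hI0 : I0 ∈ Set.Ioo (0:ℝ) 1)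
    (F0c Fc : ℝ → ℝ) (hF0c : Measurable F0c) (hFc : Measurable Fc)
    (hF0c01 : ∀ s ∈ Set.Icc (0:ℝ) T, F0c s ∈ Set.Icc (0:ℝ) 1)
    (hFc01 : ∀ s ∈ Set.Icc (0:ℝ) T, Fc s ∈ Set.Icc (0:ℝ) 1)
    (S₁ I₁ S₂ I₂ : ℝ → ℝ)
    (hSm₁ : Measurable S₁) (hIm₁ : Measurable I₁)
    (hSm₂ : Measurable S₂) (hIm₂ : Measurable I₂)
    (hb₁ : ∀ t ∈ Set.Icc (0:ℝ) T, S₁ t ∈ Set.Icc (0:ℝ) 1 ∧ I₁ t ∈ Set.Icc (0:ℝ) 1)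
    (hb₂ : ∀ t ∈ Set.Icc (0:ℝ) T, S₂ t ∈ Set.Icc (0:ℝ) 1 ∧ I₂ t ∈ Set.Icc (0:ℝ) 1)
    (heqS₁ : ∀ t ∈ Set.Icc (0:ℝ) T,
      S₁ t = 1 - I0 - lam * ∫ s in (0:ℝ)..t, S₁ s * I₁ s)
    (heqI₁ : ∀ t ∈ Set.Icc (0:ℝ) T,
      I₁ t = I0 * F0c t + lam * ∫ s in (0:ℝ)..t, Fc (t - s) * (S₁ s * I₁ s))
    (heqS₂ : ∀ t ∈ Set.Icc (0:ℝ) T,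
      S₂ t = 1 - I0 - lam * ∫ s in (0:ℝ)..t, S₂ s * I₂ s)
    (heqI₂ : ∀ t ∈ Set.Icc (0:ℝ) T,
      I₂ t = I0 * F0c t + lam * ∫ s in (0:ℝ)..t, Fc (t - s) * (S₂ s * I₂ s)) :
    ∀ t ∈ Set.Icc (0:ℝ) T, S₁ t = S₂ t ∧ I₁ t = I₂ t := by
  set g : ℝ → ℝ := fun s => |S₁ s - S₂ s| + |I₁ s - I₂ s| with hgdef
  have hgmeas : Measurable g := ((hSm₁.sub hSm₂).abs).add ((hIm₁.sub hIm₂).abs)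
  have hgnn : ∀ s, 0 ≤ g s := fun s => add_nonneg (abs_nonneg _) (abs_nonneg _)
  have hsub : ∀ u ∈ Icc (0:ℝ) T, Set.uIcc (0:ℝ) u ⊆ Icc (0:ℝ) T := by
    intro u hu
    rw [Set.uIcc_of_le hu.1]
    exact Icc_subset_Icc le_rfl hu.2
  have hgle2 : ∀ s ∈ Icc (0:ℝ) T, g s ≤ 2 := by
    intro s hs
    obtain ⟨hS1, hI1⟩ := hb₁ s hs
    obtain ⟨hS2, hI2⟩ := hb₂ s hs
    have h1 : |S₁ s - S₂ s| ≤ 1 :=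
      abs_le.2 ⟨by linarith [hS1.1, hS2.2], by linarith [hS1.2, hS2.1]⟩
    have h2 : |I₁ s - I₂ s| ≤ 1 :=
      abs_le.2 ⟨by linarith [hI1.1, hI2.2], by linarith [hI1.2, hI2.1]⟩
    simp only [hgdef]; linarith
  have hprod : ∀ s ∈ Icc (0:ℝ) T, |S₁ s * I₁ s - S₂ s * I₂ s| ≤ g s := by
    intro s hs
    obtain ⟨hS1, hI1⟩ := hb₁ s hs
    obtain ⟨hS2, hI2⟩ := hb₂ s hs
    have hI1a : |I₁ s| ≤ 1 := abs_le.2 ⟨by linarith [hI1.1], hI1.2⟩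
    have hS2a : |S₂ s| ≤ 1 := abs_le.2 ⟨by linarith [hS2.1], hS2.2⟩
    have h1 : S₁ s * I₁ s - S₂ s * I₂ s
        = (S₁ s - S₂ s) * I₁ s + S₂ s * (I₁ s - I₂ s) := by ring
    calc |S₁ s * I₁ s - S₂ s * I₂ s|
        ≤ |(S₁ s - S₂ s) * I₁ s| + |S₂ s * (I₁ s - I₂ s)| := by
          rw [h1]; exact abs_add_le _ _
      _ ≤ |S₁ s - S₂ s| * 1 + 1 * |I₁ s - I₂ s| := by
          rw [abs_mul, abs_mul]
          exact add_le_add (mul_le_mul_of_nonneg_left hI1a (abs_nonneg _))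
            (mul_le_mul_of_nonneg_right hS2a (abs_nonneg _))
      _ = g s := by simp [hgdef]
  -- integrability facts
  have hi1 : ∀ u ∈ Icc (0:ℝ) T, IntervalIntegrable (fun s => S₁ s * I₁ s) volume 0 u := by
    intro u hu
    refine intervalIntegrable_of_bdd' (C := 1) (hSm₁.mul hIm₁) ?_
    intro x hx
    obtain ⟨hS, hI⟩ := hb₁ x (hsub u hu hx)
    rw [abs_mul]
    calc |S₁ x| * |I₁ x| ≤ 1 * 1 := by
          gcongr <;> rw [abs_le] <;> constructor <;> linarith [hS.1, hS.2, hI.1, hI.2]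
      _ = 1 := one_mul 1
  have hi2 : ∀ u ∈ Icc (0:ℝ) T, IntervalIntegrable (fun s => S₂ s * I₂ s) volume 0 u := by
    intro u hu
    refine intervalIntegrable_of_bdd' (C := 1) (hSm₂.mul hIm₂) ?_
    intro x hx
    obtain ⟨hS, hI⟩ := hb₂ x (hsub u hu hx)
    rw [abs_mul]
    calc |S₂ x| * |I₂ x| ≤ 1 * 1 := by
          gcongr <;> rw [abs_le] <;> constructor <;> linarith [hS.1, hS.2, hI.1, hI.2]
      _ = 1 := one_mul 1
  have hig : ∀ u ∈ Icc (0:ℝ) T, IntervalIntegrable g volume 0 u := by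
    intro u hu
    refine intervalIntegrable_of_bdd' (C := 2) hgmeas ?_
    intro x hx
    rw [abs_of_nonneg (hgnn x)]
    exact hgle2 x (hsub u hu hx)
  -- key Gronwall-type inequality
  have key : ∀ t ∈ Icc (0:ℝ) T, g t ≤ (2 * lam) * ∫ s in (0:ℝ)..t, g s := by
    intro t ht
    have ht0 : (0:ℝ) ≤ t := ht.1
    have habs : |∫ s in (0:ℝ)..t, (S₁ s * I₁ s - S₂ s * I₂ s)|
        ≤ ∫ s in (0:ℝ)..t, g s := by
      have hdm : Measurable fun s => |S₁ s * I₁ s - S₂ s * I₂ s| :=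
        ((hSm₁.mul hIm₁).sub (hSm₂.mul hIm₂)).abs
      have hdint : IntervalIntegrable (fun s => |S₁ s * I₁ s - S₂ s * I₂ s|) volume 0 t := by
        refine intervalIntegrable_of_bdd' (C := 2) hdm ?_
        intro x hx
        rw [abs_abs]
        exact le_trans (hprod x (hsub t ht hx)) (hgle2 x (hsub t ht hx))
      calc |∫ s in (0:ℝ)..t, (S₁ s * I₁ s - S₂ s * I₂ s)|
          ≤ ∫ s in (0:ℝ)..t, |S₁ s * I₁ s - S₂ s * I₂ s| :=
            intervalIntegral.abs_integral_le_integral_abs ht0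
        _ ≤ ∫ s in (0:ℝ)..t, g s := by
            refine intervalIntegral.integral_mono_on ht0 hdint (hig t ht) ?_
            intro x hx
            exact hprod x (hsub t ht (by rw [Set.uIcc_of_le ht0]; exact hx))
    have hS : |S₁ t - S₂ t| ≤ lam * ∫ s in (0:ℝ)..t, g s := by
      rw [heqS₁ t ht, heqS₂ t ht]
      have h1 : (1 - I0 - lam * ∫ s in (0:ℝ)..t, S₁ s * I₁ s)
          - (1 - I0 - lam * ∫ s in (0:ℝ)..t, S₂ s * I₂ s)
          = -(lam * ((∫ s in (0:ℝ)..t, S₁ s * I₁ s) - ∫ s in (0:ℝ)..t, S₂ s * I₂ s)) := by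
        ring
      rw [h1, abs_neg, abs_mul, abs_of_pos hlam,
        ← intervalIntegral.integral_sub (hi1 t ht) (hi2 t ht)]
      exact mul_le_mul_of_nonneg_left habs hlam.le
    have hI : |I₁ t - I₂ t| ≤ lam * ∫ s in (0:ℝ)..t, g s := by
      rw [heqI₁ t ht, heqI₂ t ht]
      have hiF1 : IntervalIntegrable (fun s => Fc (t - s) * (S₁ s * I₁ s)) volume 0 t := by
        refine intervalIntegrable_of_bdd' (C := 1)
          ((hFc.comp (measurable_const.sub measurable_id)).mul (hSm₁.mul hIm₁)) ?_
        intro x hx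
        have hx' := hsub t ht hx
        have hts : t - x ∈ Icc (0:ℝ) T := ⟨by
          rw [Set.uIcc_of_le ht0] at hx; linarith [hx.2], by
          rw [Set.uIcc_of_le ht0] at hx; linarith [hx.1, ht.2]⟩
        obtain ⟨hS, hI⟩ := hb₁ x hx'
        obtain ⟨hF1, hF2⟩ := hFc01 (t - x) hts
        rw [abs_mul, abs_mul]
        calc |Fc (t - x)| * (|S₁ x| * |I₁ x|) ≤ 1 * (1 * 1) := by
              gcongr <;> rw [abs_le] <;> constructor <;>
                linarith [hS.1, hS.2, hI.1, hI.2]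
          _ = 1 := by ring
      have hiF2 : IntervalIntegrable (fun s => Fc (t - s) * (S₂ s * I₂ s)) volume 0 t := by
        refine intervalIntegrable_of_bdd' (C := 1)
          ((hFc.comp (measurable_const.sub measurable_id)).mul (hSm₂.mul hIm₂)) ?_
        intro x hx
        have hx' := hsub t ht hx
        have hts : t - x ∈ Icc (0:ℝ) T := ⟨by
          rw [Set.uIcc_of_le ht0] at hx; linarith [hx.2], by
          rw [Set.uIcc_of_le ht0] at hx; linarith [hx.1, ht.2]⟩
        obtain ⟨hS, hI⟩ := hb₂ x hx'
        obtain ⟨hF1, hF2⟩ := hFc01 (t - x) hts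
        rw [abs_mul, abs_mul]
        calc |Fc (t - x)| * (|S₂ x| * |I₂ x|) ≤ 1 * (1 * 1) := by
              gcongr <;> rw [abs_le] <;> constructor <;>
                linarith [hS.1, hS.2, hI.1, hI.2]
          _ = 1 := by ring
      have h1 : (I0 * F0c t + lam * ∫ s in (0:ℝ)..t, Fc (t - s) * (S₁ s * I₁ s))
          - (I0 * F0c t + lam * ∫ s in (0:ℝ)..t, Fc (t - s) * (S₂ s * I₂ s))
          = lam * ((∫ s in (0:ℝ)..t, Fc (t - s) * (S₁ s * I₁ s))
            - ∫ s in (0:ℝ)..t, Fc (t - s) * (S₂ s * I₂ s)) := by ring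
      rw [h1, abs_mul, abs_of_pos hlam, ← intervalIntegral.integral_sub hiF1 hiF2]
      refine mul_le_mul_of_nonneg_left ?_ hlam.le
      have hdm : Measurable fun s =>
          |Fc (t - s) * (S₁ s * I₁ s) - Fc (t - s) * (S₂ s * I₂ s)| :=
        (((hFc.comp (measurable_const.sub measurable_id)).mul (hSm₁.mul hIm₁)).sub
          ((hFc.comp (measurable_const.sub measurable_id)).mul (hSm₂.mul hIm₂))).abs
      have hptwise : ∀ x ∈ Icc (0:ℝ) t,
          |Fc (t - x) * (S₁ x * I₁ x) - Fc (t - x) * (S₂ x * I₂ x)| ≤ g x := by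
        intro x hx
        have hx' : x ∈ Icc (0:ℝ) T := ⟨hx.1, hx.2.trans ht.2⟩
        have hts : t - x ∈ Icc (0:ℝ) T := ⟨by linarith [hx.2], by linarith [hx.1, ht.2]⟩
        obtain ⟨hF1, hF2⟩ := hFc01 (t - x) hts
        have hFa : |Fc (t - x)| ≤ 1 := abs_le.2 ⟨by linarith, hF2⟩
        calc |Fc (t - x) * (S₁ x * I₁ x) - Fc (t - x) * (S₂ x * I₂ x)|
            = |Fc (t - x)| * |S₁ x * I₁ x - S₂ x * I₂ x| := by
              rw [← abs_mul]; ring_nf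
          _ ≤ 1 * g x :=
              mul_le_mul hFa (hprod x hx') (abs_nonneg _) zero_le_one
          _ = g x := one_mul _
      have hdint : IntervalIntegrable
          (fun s => |Fc (t - s) * (S₁ s * I₁ s) - Fc (t - s) * (S₂ s * I₂ s)|) volume 0 t := by
        refine intervalIntegrable_of_bdd' (C := 2) hdm ?_
        intro x hx
        rw [abs_abs]
        refine le_trans (hptwise x (by rwa [Set.uIcc_of_le ht0] at hx)) ?_
        exact hgle2 x (hsub t ht hx)
      calc |∫ s in (0:ℝ)..t, (Fc (t - s) * (S₁ s * I₁ s) - Fc (t - s) * (S₂ s * I₂ s))|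
          ≤ ∫ s in (0:ℝ)..t, |Fc (t - s) * (S₁ s * I₁ s) - Fc (t - s) * (S₂ s * I₂ s)| :=
            intervalIntegral.abs_integral_le_integral_abs ht0
        _ ≤ ∫ s in (0:ℝ)..t, g s :=
            intervalIntegral.integral_mono_on ht0 hdint (hig t ht) hptwise
    calc g t = |S₁ t - S₂ t| + |I₁ t - I₂ t| := rfl
      _ ≤ lam * (∫ s in (0:ℝ)..t, g s) + lam * ∫ s in (0:ℝ)..t, g s := add_le_add hS hI
      _ = (2 * lam) * ∫ s in (0:ℝ)..t, g s := by ring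
  -- iterate
  have hbound : ∀ n : ℕ, ∀ t ∈ Icc (0:ℝ) T,
      g t ≤ 2 * (2 * lam) ^ n * t ^ n / (n.factorial : ℝ) := by
    intro n
    induction n with
    | zero =>
      intro t ht
      simpa using hgle2 t ht
    | succ n ih =>
      intro t ht
      have ht0 : (0:ℝ) ≤ t := ht.1
      have hpint : IntervalIntegrable
          (fun s => 2 * (2 * lam) ^ n * s ^ n / (n.factorial : ℝ)) volume 0 t :=
        (((continuous_const.mul (continuous_pow n)).div_const _).intervalIntegrable 0 t)
      have hfacpos : (0:ℝ) < (n.factorial : ℝ) := by positivity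
      calc g t ≤ (2 * lam) * ∫ s in (0:ℝ)..t, g s := key t ht
        _ ≤ (2 * lam) * ∫ s in (0:ℝ)..t, 2 * (2 * lam) ^ n * s ^ n / (n.factorial : ℝ) := by
            refine mul_le_mul_of_nonneg_left ?_ (by positivity)
            refine intervalIntegral.integral_mono_on ht0 (hig t ht) hpint ?_
            intro x hx
            exact ih x ⟨hx.1, hx.2.trans ht.2⟩
        _ = 2 * (2 * lam) ^ (n + 1) * t ^ (n + 1) / ((n + 1).factorial : ℝ) := by
            have heq : (fun s : ℝ => 2 * (2 * lam) ^ n * s ^ n / (n.factorial : ℝ))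
                = fun s : ℝ => (2 * (2 * lam) ^ n / (n.factorial : ℝ)) * s ^ n := by
              funext s; ring
            rw [heq, intervalIntegral.integral_const_mul, integral_pow]
            rw [Nat.factorial_succ]
            push_cast
            field_simp
            ring
  intro t ht
  have h0 : g t ≤ 0 := by
    have hlim : Tendsto (fun n : ℕ => 2 * ((2 * lam * T) ^ n / (n.factorial : ℝ)))
        atTop (𝓝 0) := by
      have := FloorSemiring.tendsto_pow_div_factorial_atTop (K := ℝ) (2 * lam * T)
      simpa using this.const_mul 2
    refine ge_of_tendsto hlim ?_
    filter_upwards with n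
    calc g t ≤ 2 * (2 * lam) ^ n * t ^ n / (n.factorial : ℝ) := hbound n t ht
      _ ≤ 2 * ((2 * lam * T) ^ n / (n.factorial : ℝ)) := by
          have h2 : 2 * ((2 * lam * T) ^ n / (n.factorial : ℝ))
              = 2 * (2 * lam) ^ n * T ^ n / (n.factorial : ℝ) := by
            rw [mul_pow]; ring
          rw [h2]
          gcongr
          · exact ht.1
          · exact ht.2
  have hg0 : g t = 0 := le_antisymm h0 (hgnn t)
  have ha := abs_nonneg (S₁ t - S₂ t)
  have hb := abs_nonneg (I₁ t - I₂ t)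
  have hgt : |S₁ t - S₂ t| + |I₁ t - I₂ t| = 0 := hg0
  constructor
  · have : |S₁ t - S₂ t| = 0 := by linarith
    exact sub_eq_zero.mp (abs_eq_zero.mp this)
  · have : |I₁ t - I₂ t| = 0 := by linarith
    exact sub_eq_zero.mp (abs_eq_zero.mp this)
end

section
/- If (S₁, I₁) and (S₂, I₂) are two solutions of the SIR fluid equations with the same data, then for all t, |S₁(t) − S₂(t)| + |I₁(t) − I₂(t)| ≤ 2λ ∫₀ᵗ (|S₁(s) − S₂(s)| + |I₁(s) − I₂(s)|) ds, and hence by Gronwall's inequality S₁ = S₂ and I₁ = I₂. -/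
open MeasureTheory Set

/-!
Writing `g = |S₁ - S₂| + |I₁ - I₂|`, the identity
`S₁ I₁ - S₂ I₂ = (S₁ - S₂) I₁ + S₂ (I₁ - I₂)` together with `0 ≤ S, I, Fᶜ ≤ 1` bounds the
difference of the integrands in both equations by `g`, so each of the two equations contributes
`λ ∫₀ᵗ g` to `g t`. Iterating `g t ≤ 2λ ∫₀ᵗ g` from the a priori bound `g ≤ 2` gives
`g t ≤ 2 (2λt)ⁿ / n!` for every `n`, hence `g = 0`.
-/

lemma abs_mul_sub_mul_le {a b c d : ℝ} (hb : |b| ≤ 1) (hc : |c| ≤ 1) :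
    |a * b - c * d| ≤ |a - c| + |b - d| :=
  calc |a * b - c * d| = |(a - c) * b + c * (b - d)| := by ring_nf
    _ ≤ |a - c| * |b| + |c| * |b - d| := by
        rw [← abs_mul, ← abs_mul]; exact abs_add_le _ _
    _ ≤ |a - c| * 1 + 1 * |b - d| := by gcongr
    _ = |a - c| + |b - d| := by ring

lemma intervalIntegrable_of_abs_le {f : ℝ → ℝ} {a b C : ℝ} (hf : Measurable f) (hab : a ≤ b)
    (hC : ∀ s ∈ Icc a b, |f s| ≤ C) : IntervalIntegrable f volume a b := by
  refine (intervalIntegrable_const (c := C)).mono_fun' hf.aestronglyMeasurable ?_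
  rw [uIoc_of_le hab]
  filter_upwards [ae_restrict_mem measurableSet_Ioc] with s hs
  exact hC s (Ioc_subset_Icc_self hs)

lemma abs_integral_sub_integral_le {f₁ f₂ g : ℝ → ℝ} {a b : ℝ} (hab : a ≤ b)
    (hf₁ : IntervalIntegrable f₁ volume a b) (hf₂ : IntervalIntegrable f₂ volume a b)
    (hg : IntervalIntegrable g volume a b) (h : ∀ s ∈ Icc a b, |f₁ s - f₂ s| ≤ g s) :
    |(∫ s in a..b, f₁ s) - ∫ s in a..b, f₂ s| ≤ ∫ s in a..b, g s := by
  rw [← intervalIntegral.integral_sub hf₁ hf₂]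
  exact intervalIntegral.norm_integral_le_of_norm_le (f := fun s => f₁ s - f₂ s) hab
    (ae_of_all _ fun s hs => h s (Ioc_subset_Icc_self hs)) hg

lemma le_mul_pow_div_factorial_of_le_mul_integral {g : ℝ → ℝ} {K M T : ℝ} (hK : 0 ≤ K)
    (hg : IntervalIntegrable g volume 0 T) (hM : ∀ t ∈ Icc 0 T, g t ≤ M)
    (hgK : ∀ t ∈ Icc 0 T, g t ≤ K * ∫ s in 0..t, g s) (n : ℕ) :
    ∀ t ∈ Icc 0 T, g t ≤ M * (K * t) ^ n / n.factorial := by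
  induction n with
  | zero => simpa using hM
  | succ n ih =>
    intro t ht
    have hgt : IntervalIntegrable g volume 0 t :=
      hg.mono_set (uIcc_subset_uIcc_left (by rw [uIcc_of_le (ht.1.trans ht.2)]; exact ht))
    have hint : ∫ s in 0..t, g s ≤ ∫ s in 0..t, M * K ^ n / n.factorial * s ^ n := by
      refine intervalIntegral.integral_mono_on ht.1 hgt
        ((by fun_prop : Continuous _).intervalIntegrable _ _) fun s hs => ?_
      calc g s ≤ M * (K * s) ^ n / n.factorial := ih s ⟨hs.1, hs.2.trans ht.2⟩
        _ = M * K ^ n / n.factorial * s ^ n := by rw [mul_pow]; ring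
    calc g t ≤ K * ∫ s in 0..t, g s := hgK t ht
      _ ≤ K * ∫ s in 0..t, M * K ^ n / n.factorial * s ^ n := by gcongr
      _ = M * (K * t) ^ (n + 1) / (n + 1).factorial := by
        rw [intervalIntegral.integral_const_mul, integral_pow, Nat.factorial_succ]
        push_cast
        field_simp
        ring

lemma le_zero_of_le_mul_integral {g : ℝ → ℝ} {K M T : ℝ} (hK : 0 ≤ K)
    (hg : IntervalIntegrable g volume 0 T) (hM : ∀ t ∈ Icc 0 T, g t ≤ M)
    (hgK : ∀ t ∈ Icc 0 T, g t ≤ K * ∫ s in 0..t, g s) :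
    ∀ t ∈ Icc 0 T, g t ≤ 0 := by
  intro t ht
  have hlim : Filter.Tendsto (fun n : ℕ => M * (K * t) ^ n / n.factorial) Filter.atTop
      (nhds 0) := by
    simpa [mul_div_assoc] using
      (FloorSemiring.tendsto_pow_div_factorial_atTop (K * t)).const_mul M
  exact ge_of_tendsto' hlim fun n =>
    le_mul_pow_div_factorial_of_le_mul_integral hK hg hM hgK n t ht

structure IsSIRFluidSolution (T lam I0 : ℝ) (F0c Fc S I : ℝ → ℝ) : Prop where
  measurable_S : Measurable S
  measurable_I : Measurable I
  mem_Icc : ∀ t ∈ Icc (0:ℝ) T, S t ∈ Icc (0:ℝ) 1 ∧ I t ∈ Icc (0:ℝ) 1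
  S_eq : ∀ t ∈ Icc (0:ℝ) T, S t = 1 - I0 - lam * ∫ s in (0:ℝ)..t, S s * I s
  I_eq : ∀ t ∈ Icc (0:ℝ) T,
    I t = I0 * F0c t + lam * ∫ s in (0:ℝ)..t, Fc (t - s) * (S s * I s)

namespace IsSIRFluidSolution

variable {T lam I0 : ℝ} {F0c Fc S I S₁ I₁ S₂ I₂ : ℝ → ℝ}

lemma abs_S_le_one (h : IsSIRFluidSolution T lam I0 F0c Fc S I) {t : ℝ} (ht : t ∈ Icc 0 T) :
    |S t| ≤ 1 :=
  abs_le.2 ⟨by linarith [(h.mem_Icc t ht).1.1], (h.mem_Icc t ht).1.2⟩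

lemma abs_I_le_one (h : IsSIRFluidSolution T lam I0 F0c Fc S I) {t : ℝ} (ht : t ∈ Icc 0 T) :
    |I t| ≤ 1 :=
  abs_le.2 ⟨by linarith [(h.mem_Icc t ht).2.1], (h.mem_Icc t ht).2.2⟩

lemma intervalIntegrable_kernel_mul (h : IsSIRFluidSolution T lam I0 F0c Fc S I)
    {k : ℝ → ℝ} (hk : Measurable k) (hk1 : ∀ s, |k s| ≤ 1) {t : ℝ} (ht : t ∈ Icc 0 T) :
    IntervalIntegrable (fun s => k s * (S s * I s)) volume 0 t := by
  refine intervalIntegrable_of_abs_le (C := 1)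
    (hk.mul (h.measurable_S.mul h.measurable_I)) ht.1 fun s hs => ?_
  have hs' : s ∈ Icc 0 T := ⟨hs.1, hs.2.trans ht.2⟩
  rw [abs_mul, abs_mul]
  calc |k s| * (|S s| * |I s|) ≤ 1 * (1 * 1) := by
        gcongr
        exacts [hk1 s, h.abs_S_le_one hs', h.abs_I_le_one hs']
    _ = 1 := by norm_num

lemma intervalIntegrable_mul (h : IsSIRFluidSolution T lam I0 F0c Fc S I) {t : ℝ}
    (ht : t ∈ Icc 0 T) : IntervalIntegrable (fun s => S s * I s) volume 0 t := by
  simpa using h.intervalIntegrable_kernel_mul measurable_const (fun _ => abs_one.le) ht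

lemma abs_sub_add_abs_sub_le_two (h₁ : IsSIRFluidSolution T lam I0 F0c Fc S₁ I₁)
    (h₂ : IsSIRFluidSolution T lam I0 F0c Fc S₂ I₂) {t : ℝ} (ht : t ∈ Icc 0 T) :
    |S₁ t - S₂ t| + |I₁ t - I₂ t| ≤ 2 := by
  obtain ⟨⟨hS₁, hS₁'⟩, hI₁, hI₁'⟩ := h₁.mem_Icc t ht
  obtain ⟨⟨hS₂, hS₂'⟩, hI₂, hI₂'⟩ := h₂.mem_Icc t ht
  linarith [abs_sub_le_of_nonneg_of_le hS₁ hS₁' hS₂ hS₂',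
    abs_sub_le_of_nonneg_of_le hI₁ hI₁' hI₂ hI₂']

lemma intervalIntegrable_abs_sub_add_abs_sub (h₁ : IsSIRFluidSolution T lam I0 F0c Fc S₁ I₁)
    (h₂ : IsSIRFluidSolution T lam I0 F0c Fc S₂ I₂) {t : ℝ} (ht : t ∈ Icc 0 T) :
    IntervalIntegrable (fun s => |S₁ s - S₂ s| + |I₁ s - I₂ s|) volume 0 t := by
  refine intervalIntegrable_of_abs_le (C := 2) ((h₁.measurable_S.sub h₂.measurable_S).abs.add
    (h₁.measurable_I.sub h₂.measurable_I).abs) ht.1 fun s hs => ?_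
  rw [abs_of_nonneg (by positivity)]
  exact h₁.abs_sub_add_abs_sub_le_two h₂ ⟨hs.1, hs.2.trans ht.2⟩

lemma abs_sub_add_abs_sub_le (h₁ : IsSIRFluidSolution T lam I0 F0c Fc S₁ I₁)
    (h₂ : IsSIRFluidSolution T lam I0 F0c Fc S₂ I₂) (hlam : 0 ≤ lam) (hFc : Measurable Fc)
    (hFc01 : ∀ s, Fc s ∈ Icc (0:ℝ) 1) {t : ℝ} (ht : t ∈ Icc 0 T) :
    |S₁ t - S₂ t| + |I₁ t - I₂ t| ≤
      2 * lam * ∫ s in (0:ℝ)..t, (|S₁ s - S₂ s| + |I₁ s - I₂ s|) := by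
  have hsub : ∀ s ∈ Icc 0 t, s ∈ Icc 0 T := fun s hs => ⟨hs.1, hs.2.trans ht.2⟩
  have hprod : ∀ s ∈ Icc 0 t, |S₁ s * I₁ s - S₂ s * I₂ s| ≤ |S₁ s - S₂ s| + |I₁ s - I₂ s| :=
    fun s hs => abs_mul_sub_mul_le (h₁.abs_I_le_one (hsub s hs)) (h₂.abs_S_le_one (hsub s hs))
  have hg := h₁.intervalIntegrable_abs_sub_add_abs_sub h₂ ht
  have hFc1 : ∀ s, |Fc (t - s)| ≤ 1 := fun s =>
    abs_le.2 ⟨by linarith [(hFc01 (t - s)).1], (hFc01 (t - s)).2⟩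
  have hFcm : Measurable fun s => Fc (t - s) := by fun_prop
  have hS : |S₁ t - S₂ t| ≤ lam * ∫ s in (0:ℝ)..t, (|S₁ s - S₂ s| + |I₁ s - I₂ s|) := by
    have := abs_integral_sub_integral_le ht.1 (h₁.intervalIntegrable_mul ht)
      (h₂.intervalIntegrable_mul ht) hg hprod
    rw [h₁.S_eq t ht, h₂.S_eq t ht]
    rw [abs_le] at this ⊢
    constructor <;> nlinarith [this.1, this.2]
  have hI : |I₁ t - I₂ t| ≤ lam * ∫ s in (0:ℝ)..t, (|S₁ s - S₂ s| + |I₁ s - I₂ s|) := by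
    have := abs_integral_sub_integral_le ht.1 (h₁.intervalIntegrable_kernel_mul hFcm hFc1 ht)
      (h₂.intervalIntegrable_kernel_mul hFcm hFc1 ht) hg fun s hs => by
        rw [← mul_sub, abs_mul]
        exact (mul_le_of_le_one_left (abs_nonneg _) (hFc1 s)).trans (hprod s hs)
    rw [h₁.I_eq t ht, h₂.I_eq t ht]
    rw [abs_le] at this ⊢
    constructor <;> nlinarith [this.1, this.2]
  linarith

end IsSIRFluidSolution

theorem sir_fluid_gronwall_general
    (T lam I0 : ℝ) (hlam : 0 < lam)
    (F0c Fc : ℝ → ℝ) (hFc : Measurable Fc)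
    (hFc01 : ∀ s, Fc s ∈ Set.Icc (0:ℝ) 1)
    (S₁ I₁ S₂ I₂ : ℝ → ℝ)
    (hSm₁ : Measurable S₁) (hIm₁ : Measurable I₁)
    (hSm₂ : Measurable S₂) (hIm₂ : Measurable I₂)
    (hb₁ : ∀ t ∈ Set.Icc (0:ℝ) T, S₁ t ∈ Set.Icc (0:ℝ) 1 ∧ I₁ t ∈ Set.Icc (0:ℝ) 1)
    (hb₂ : ∀ t ∈ Set.Icc (0:ℝ) T, S₂ t ∈ Set.Icc (0:ℝ) 1 ∧ I₂ t ∈ Set.Icc (0:ℝ) 1)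
    (heqS₁ : ∀ t ∈ Set.Icc (0:ℝ) T,
      S₁ t = 1 - I0 - lam * ∫ s in (0:ℝ)..t, S₁ s * I₁ s)
    (heqI₁ : ∀ t ∈ Set.Icc (0:ℝ) T,
      I₁ t = I0 * F0c t + lam * ∫ s in (0:ℝ)..t, Fc (t - s) * (S₁ s * I₁ s))
    (heqS₂ : ∀ t ∈ Set.Icc (0:ℝ) T,
      S₂ t = 1 - I0 - lam * ∫ s in (0:ℝ)..t, S₂ s * I₂ s)
    (heqI₂ : ∀ t ∈ Set.Icc (0:ℝ) T,
      I₂ t = I0 * F0c t + lam * ∫ s in (0:ℝ)..t, Fc (t - s) * (S₂ s * I₂ s)) :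
    (∀ t ∈ Set.Icc (0:ℝ) T,
      |S₁ t - S₂ t| + |I₁ t - I₂ t| ≤
        2 * lam * ∫ s in (0:ℝ)..t, (|S₁ s - S₂ s| + |I₁ s - I₂ s|)) ∧
    (∀ t ∈ Set.Icc (0:ℝ) T, S₁ t = S₂ t ∧ I₁ t = I₂ t) := by
  have h₁ : IsSIRFluidSolution T lam I0 F0c Fc S₁ I₁ := ⟨hSm₁, hIm₁, hb₁, heqS₁, heqI₁⟩
  have h₂ : IsSIRFluidSolution T lam I0 F0c Fc S₂ I₂ := ⟨hSm₂, hIm₂, hb₂, heqS₂, heqI₂⟩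
  have hgron : ∀ t ∈ Icc 0 T, |S₁ t - S₂ t| + |I₁ t - I₂ t| ≤
      2 * lam * ∫ s in (0:ℝ)..t, (|S₁ s - S₂ s| + |I₁ s - I₂ s|) :=
    fun t ht => h₁.abs_sub_add_abs_sub_le h₂ hlam.le hFc hFc01 ht
  refine ⟨hgron, fun t ht => ?_⟩
  have hzero := le_zero_of_le_mul_integral (by positivity)
    (h₁.intervalIntegrable_abs_sub_add_abs_sub h₂ ⟨ht.1.trans ht.2, le_rfl⟩)
    (fun t ht => h₁.abs_sub_add_abs_sub_le_two h₂ ht) hgron t ht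
  have hS := abs_nonneg (S₁ t - S₂ t)
  have hI := abs_nonneg (I₁ t - I₂ t)
  exact ⟨sub_eq_zero.1 (abs_nonpos_iff.1 (by linarith)),
    sub_eq_zero.1 (abs_nonpos_iff.1 (by linarith))⟩

/-- Gronwall-type inequality for differences of SIR fluid solutions, and the
resulting uniqueness. -/
theorem sir_fluid_gronwall
    (T lam I0 : ℝ) (hT : 0 < T) (hlam : 0 < lam) (hI0 : I0 ∈ Set.Ioo (0:ℝ) 1)
    (F0c Fc : ℝ → ℝ) (hF0c : Measurable F0c) (hFc : Measurable Fc)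
    (hF0c01 : ∀ s, F0c s ∈ Set.Icc (0:ℝ) 1)
    (hFc01 : ∀ s, Fc s ∈ Set.Icc (0:ℝ) 1)
    (S₁ I₁ S₂ I₂ : ℝ → ℝ)
    (hSm₁ : Measurable S₁) (hIm₁ : Measurable I₁)
    (hSm₂ : Measurable S₂) (hIm₂ : Measurable I₂)
    (hb₁ : ∀ t ∈ Set.Icc (0:ℝ) T, S₁ t ∈ Set.Icc (0:ℝ) 1 ∧ I₁ t ∈ Set.Icc (0:ℝ) 1)
    (hb₂ : ∀ t ∈ Set.Icc (0:ℝ) T, S₂ t ∈ Set.Icc (0:ℝ) 1 ∧ I₂ t ∈ Set.Icc (0:ℝ) 1)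
    (heqS₁ : ∀ t ∈ Set.Icc (0:ℝ) T,
      S₁ t = 1 - I0 - lam * ∫ s in (0:ℝ)..t, S₁ s * I₁ s)
    (heqI₁ : ∀ t ∈ Set.Icc (0:ℝ) T,
      I₁ t = I0 * F0c t + lam * ∫ s in (0:ℝ)..t, Fc (t - s) * (S₁ s * I₁ s))
    (heqS₂ : ∀ t ∈ Set.Icc (0:ℝ) T,
      S₂ t = 1 - I0 - lam * ∫ s in (0:ℝ)..t, S₂ s * I₂ s)
    (heqI₂ : ∀ t ∈ Set.Icc (0:ℝ) T,
      I₂ t = I0 * F0c t + lam * ∫ s in (0:ℝ)..t, Fc (t - s) * (S₂ s * I₂ s)) :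
    (∀ t ∈ Set.Icc (0:ℝ) T,
      |S₁ t - S₂ t| + |I₁ t - I₂ t| ≤
        2 * lam * ∫ s in (0:ℝ)..t, (|S₁ s - S₂ s| + |I₁ s - I₂ s|)) ∧
    (∀ t ∈ Set.Icc (0:ℝ) T, S₁ t = S₂ t ∧ I₁ t = I₂ t) :=
  sir_fluid_gronwall_general T lam I0 hlam F0c Fc hFc hFc01 S₁ I₁ S₂ I₂ hSm₁ hIm₁ hSm₂ hIm₂ hb₁ hb₂
    heqS₁ heqI₁ heqS₂ heqI₂
end

section
/- Let G be a cumulative distribution function on ℝ₊ with mean γ⁻¹ = ∫₀^∞ Gᶜ(s) ds < ∞, F a c.d.f. with mean μ⁻¹ < ∞, G₀ the equilibrium distribution of G (G₀(t) = γ∫₀ᵗ Gᶜ(s) ds), and Ψ₀(t) = ∫₀ᵗ Fᶜ(t−u) dG₀(u), Ψ(t) = ∫₀ᵗ Fᶜ(t−u) dG(u). Then for all t ≥ 0, γ⁻¹Ψ₀(t) + ∫₀ᵗ Ψ(s) ds = ∫₀ᵗ Fᶜ(s) ds. -/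
/-!
Since `dG₀(u) = γ Gᶜ(u) du`, reflecting `u ↦ t - u` gives
`γ⁻¹ Ψ₀(t) = ∫₀ᵗ Fᶜ(v) dv - ∫₀ᵗ Fᶜ(v) G(t - v) dv`. On the other hand `G` puts no mass on
`(-∞, 0]`, so `G(x)` is the `dG`-mass of `(0, x]`, and exchanging the order of integration twice
(the second time after the shift `s = u + v`) turns `∫₀ᵗ Ψ(s) ds` into `∫₀ᵗ Fᶜ(v) G(t - v) dv`.
-/

open MeasureTheory Set Filter

lemma setIntegral_Ioc_indicator_Ici_comp_sub (f : ℝ → ℝ) {u : ℝ} (hu : 0 < u) (t : ℝ) :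
    ∫ s in Ioc 0 t, (Ici u).indicator (fun s => f (s - u)) s
      = ∫ v in Ioc 0 t, (Iic (t - u)).indicator f v := by
  have hIcc : Ioc 0 t ∩ Ici u = Icc u t := by
    ext s; simp only [mem_inter_iff, mem_Ioc, mem_Ici, mem_Icc]; grind
  rw [setIntegral_indicator measurableSet_Ici, setIntegral_indicator measurableSet_Iic,
    Ioc_inter_Iic, min_eq_right (by linarith), hIcc, integral_Icc_eq_integral_Ioc]
  rcases le_or_gt u t with hut | htu
  · rw [← intervalIntegral.integral_of_le hut, ← intervalIntegral.integral_of_le (by linarith),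
      intervalIntegral.integral_comp_sub_right, sub_self]
  · simp [Ioc_eq_empty_of_le htu.le, Ioc_eq_empty_of_le (by linarith : t - u ≤ 0)]

theorem setIntegral_Ioc_integral_Iic_comp_sub {ν : Measure ℝ} [IsFiniteMeasure ν]
    (hν : ν (Iic 0) = 0) {f : ℝ → ℝ} (hf : Measurable f) {C : ℝ} (hfC : ∀ x, ‖f x‖ ≤ C)
    (t : ℝ) :
    ∫ s in Ioc 0 t, ∫ u in Iic s, f (s - u) ∂ν
      = ∫ v in Ioc 0 t, f v * ν.real (Iic (t - v)) := by
  set K : ℝ → ℝ → ℝ := fun s u => (Ici u).indicator (fun s => f (s - u)) s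
  set L : ℝ → ℝ → ℝ := fun u v => (Iic (t - u)).indicator f v
  have hK : Integrable (Function.uncurry K) ((volume.restrict (Ioc 0 t)).prod ν) := by
    refine .of_bound ?_ C (.of_forall fun p => ?_)
    · exact ((hf.comp (measurable_fst.sub measurable_snd)).indicator
        (measurableSet_le measurable_snd measurable_fst)).aestronglyMeasurable
    · exact (norm_indicator_le_norm_self (fun s => f (s - p.2)) p.1).trans (hfC _)
  have hL : Integrable (Function.uncurry L) (ν.prod (volume.restrict (Ioc 0 t))) := by
    refine .of_bound ?_ C (.of_forall fun p => ?_)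
    · exact ((hf.comp measurable_snd).indicator (measurableSet_le measurable_snd
        (measurable_const.sub measurable_fst))).aestronglyMeasurable
    · exact (norm_indicator_le_norm_self _ _).trans (hfC _)
  have hpos : ∀ᵐ u ∂ν, 0 < u := by
    simp only [ae_iff, not_lt]
    exact hν
  calc ∫ s in Ioc 0 t, ∫ u in Iic s, f (s - u) ∂ν
      = ∫ s in Ioc 0 t, ∫ u, K s u ∂ν := by
        congr! 2 with s
        rw [← integral_indicator measurableSet_Iic]
        rfl
    _ = ∫ u, (∫ s in Ioc 0 t, K s u) ∂ν := integral_integral_swap hK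
    _ = ∫ u, (∫ v in Ioc 0 t, L u v) ∂ν := integral_congr_ae <| by
        filter_upwards [hpos] with u hu using setIntegral_Ioc_indicator_Ici_comp_sub f hu t
    _ = ∫ v in Ioc 0 t, ∫ u, L u v ∂ν := integral_integral_swap hL
    _ = ∫ v in Ioc 0 t, f v * ν.real (Iic (t - v)) := by
        congr 1 with v
        have hLv : (fun u => L u v) = (Iic (t - v)).indicator (fun _ => f v) := by
          ext u; simp only [L, indicator, mem_Iic]; congr 1; grind
        rw [hLv, integral_indicator_const _ measurableSet_Iic, smul_eq_mul, mul_comm]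

lemma intervalIntegral_comp_sub_mul_one_sub {f g : ℝ → ℝ} {t : ℝ}
    (hf : IntervalIntegrable f volume 0 t)
    (hfg : IntervalIntegrable (fun v => f v * g (t - v)) volume 0 t) :
    ∫ u in 0..t, f (t - u) * (1 - g u)
      = (∫ v in 0..t, f v) - ∫ v in 0..t, f v * g (t - v) := by
  rw [← intervalIntegral.integral_sub hf hfg]
  simpa [mul_sub] using
    intervalIntegral.integral_comp_sub_left (fun v => f v * (1 - g (t - v))) t (a := 0) (b := t)

namespace StieltjesFunction

variable {G : StieltjesFunction ℝ}

lemma nonneg_of_eq_zero_of_nonpos (hG : ∀ s ≤ 0, G s = 0) (x : ℝ) : 0 ≤ G x := by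
  rcases le_or_gt x 0 with hx | hx
  · exact (hG x hx).ge
  · exact hG 0 le_rfl ▸ G.mono hx.le

lemma measure_Iic_of_eq_zero_of_nonpos (hG : ∀ s ≤ 0, G s = 0) (x : ℝ) :
    G.measure (Iic x) = ENNReal.ofReal (G x) := by
  rw [G.measure_Iic (tendsto_const_nhds.congr' (eventually_atBot.2 ⟨0, fun s hs => (hG s hs).symm⟩)),
    sub_zero]

lemma measureReal_Iic_of_eq_zero_of_nonpos (hG : ∀ s ≤ 0, G s = 0) (x : ℝ) :
    G.measure.real (Iic x) = G x := by
  rw [measureReal_def, measure_Iic_of_eq_zero_of_nonpos hG,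
    ENNReal.toReal_ofReal (nonneg_of_eq_zero_of_nonpos hG x)]

end StieltjesFunction

theorem equilibrium_psi_identity_general
    (γ : ℝ) (hγ : 0 < γ)
    (F : ℝ → ℝ) (hFmono : Monotone F) (hF01 : ∀ s, F s ∈ Set.Icc (0:ℝ) 1)
    (G : StieltjesFunction ℝ) (hGneg : ∀ s ≤ (0:ℝ), G s = 0) (hG1 : ∀ s, G s ≤ 1)
    (t : ℝ) (ht : 0 ≤ t) :
    γ⁻¹ * (∫ u in (0:ℝ)..t, (1 - F (t - u)) * (γ * (1 - G u)))
      + (∫ s in (0:ℝ)..t, (∫ u in Set.Iic s, (1 - F (s - u)) ∂G.measure))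
      = ∫ s in (0:ℝ)..t, (1 - F s) := by
  have hG0 := G.nonneg_of_eq_zero_of_nonpos hGneg
  have hFc : Measurable fun s => 1 - F s := measurable_const.sub hFmono.measurable
  have hFc_le : ∀ s, ‖1 - F s‖ ≤ 1 := fun s => by
    rw [Real.norm_eq_abs, abs_le]; constructor <;> linarith [(hF01 s).1, (hF01 s).2]
  have : IsFiniteMeasure G.measure :=
    G.isFiniteMeasure_of_forall_abs_le fun x => abs_le.2 ⟨by linarith [hG0 x], hG1 x⟩
  have hΨ : ∫ s in 0..t, ∫ u in Iic s, (1 - F (s - u)) ∂G.measure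
      = ∫ v in 0..t, (1 - F v) * G (t - v) := by
    have hG_Iic_zero : G.measure (Iic 0) = 0 := by
      simp [G.measure_Iic_of_eq_zero_of_nonpos hGneg, hGneg]
    simp only [intervalIntegral.integral_of_le ht,
      setIntegral_Ioc_integral_Iic_comp_sub hG_Iic_zero hFc hFc_le,
      G.measureReal_Iic_of_eq_zero_of_nonpos hGneg]
  have hFc_int : IntervalIntegrable (fun s => 1 - F s) volume 0 t :=
    intervalIntegrable_const.sub hFmono.intervalIntegrable
  have hFcG_int : IntervalIntegrable (fun v => (1 - F v) * G (t - v)) volume 0 t := by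
    refine (intervalIntegrable_const (c := (1 : ℝ))).mono_fun'
      (hFc.mul (G.mono.measurable.comp (measurable_const.sub measurable_id))).aestronglyMeasurable
      (.of_forall fun v => ?_)
    simp only [norm_mul]
    exact mul_le_one₀ (hFc_le v) (norm_nonneg _)
      (by simpa [abs_of_nonneg (hG0 _)] using hG1 (t - v))
  simp_rw [mul_left_comm _ γ, intervalIntegral.integral_const_mul, hΨ,
    intervalIntegral_comp_sub_mul_one_sub hFc_int hFcG_int]
  field_simp
  ring

/-- The identity `γ⁻¹ Ψ₀(t) + ∫₀ᵗ Ψ(s) ds = ∫₀ᵗ Fᶜ(s) ds`, where `G₀` is the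
equilibrium distribution of `G` (so that `dG₀(u) = γ Gᶜ(u) du`),
`Ψ₀(t) = ∫₀ᵗ Fᶜ(t-u) dG₀(u)` and `Ψ(t) = ∫ Fᶜ(t-u) dG(u)`. -/
theorem equilibrium_psi_identity
    (γ μ : ℝ) (hγ : 0 < γ) (hμ : 0 < μ)
    (F : ℝ → ℝ) (hFmono : Monotone F) (hF01 : ∀ s, F s ∈ Set.Icc (0:ℝ) 1)
    (hFneg : ∀ s < (0:ℝ), F s = 0)
    (hFmean : (∫ s in Set.Ioi (0:ℝ), (1 - F s)) = μ⁻¹)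
    (G : StieltjesFunction ℝ) (hGneg : ∀ s ≤ (0:ℝ), G s = 0) (hG1 : ∀ s, G s ≤ 1)
    (hGmean : (∫ s in Set.Ioi (0:ℝ), (1 - G s)) = γ⁻¹)
    (t : ℝ) (ht : 0 ≤ t) :
    γ⁻¹ * (∫ u in (0:ℝ)..t, (1 - F (t - u)) * (γ * (1 - G u)))
      + (∫ s in (0:ℝ)..t, (∫ u in Set.Iic s, (1 - F (s - u)) ∂G.measure))
      = ∫ s in (0:ℝ)..t, (1 - F s) :=
  equilibrium_psi_identity_general γ hγ F hFmono hF01 G hGneg hG1 t ht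
end

section
/- In the SIRS model with independent infectious and immune times, mean infectious time γ⁻¹ and mean immune time μ⁻¹, with λ > γ, and with initial distributions G₀ = G_e and F₀ = F_e (equilibrium distributions), the unique nontrivial equilibrium of the fluid equations is S* = γ/λ, I* = (1 − γ/λ)/(1 + γ/μ), R* = (γ/μ)·I*. In particular λ(1 − I* − R*) = γ and μR* = γI*. -/
/-!
Write `B_G(t) = ∫₀ᵗ Gᶜ` and `B_F(t) = ∫₀ᵗ Fᶜ`; the tails `∫ₜ^∞ Gᶜ`, `∫ₜ^∞ Fᶜ` are `γ⁻¹ - B_G(t)`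
and `μ⁻¹ - B_F(t)`. The renewal identity `Ψ₀(t) + γ ∫₀ᵗ Ψ = γ B_F(t)` is Fubini over the
triangle `0 < u ≤ s ≤ t`, because `G(u)` is the `dG`-mass of `(0, u]`. With these, the two fluid
equations at time `t` read `I B_G(t) (λS - γ) = 0` and `(γI - μR) B_F(t) + I (∫₀ᵗ Ψ) (λS - γ) = 0`.
As `B_G(t) → γ⁻¹` and `B_F(t) → μ⁻¹`, both are nonzero for some `t`, so `I ≠ 0` forces
`λS = γ` and then `μR = γI`; conversely these two balance equations solve both equations.
-/

open MeasureTheory Set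

/-- `p = (I*, R*)` is an equilibrium of the SIRS fluid equations with independent
infectious (c.d.f. `G`) and immune (c.d.f. `F`) periods, with initial
distributions given by the equilibrium (stationary excess) distributions, so that
`G₀ᶜ(t) = γ ∫ₜ^∞ Gᶜ`, `F₀ᶜ(t) = μ ∫ₜ^∞ Fᶜ`, `dG₀(u) = γ Gᶜ(u) du` and
`Ψ(t) = ∫ Fᶜ(t-u) dG(u)`. -/
def SIRSEquil (lam γ μ : ℝ) (G : StieltjesFunction ℝ) (F : ℝ → ℝ) (p : ℝ × ℝ) : Prop :=
  (∀ t ≥ (0:ℝ),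
    p.1 = γ * p.1 * (∫ s in Set.Ioi t, (1 - G s))
      + lam * p.1 * (1 - p.1 - p.2) * (∫ s in (0:ℝ)..t, (1 - G s))) ∧
  (∀ t ≥ (0:ℝ),
    p.2 = μ * p.2 * (∫ s in Set.Ioi t, (1 - F s))
      + p.1 * (∫ u in (0:ℝ)..t, (1 - F (t - u)) * (γ * (1 - G u)))
      + lam * (1 - p.1 - p.2) * p.1 *
          (∫ s in (0:ℝ)..t, (∫ u in Set.Iic s, (1 - F (s - u)) ∂G.measure)))

open Filter Topology

theorem integral_Ioc_integral_Ioc_swap (ν : Measure ℝ) [IsLocallyFiniteMeasure ν]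
    {g : ℝ → ℝ → ℝ} (hg : Measurable (Function.uncurry g)) {C : ℝ} (hC : ∀ s v, ‖g s v‖ ≤ C)
    (a t : ℝ) :
    ∫ s in Ioc a t, ∫ v in Ioc a s, g s v ∂ν = ∫ v in Ioc a t, (∫ s in Icc v t, g s v) ∂ν := by
  let k : ℝ → ℝ → ℝ := fun s v => if v ≤ s then g s v else 0
  have hk : Integrable (Function.uncurry k)
      ((volume.restrict (Ioc a t)).prod (ν.restrict (Ioc a t))) := by
    have : IsFiniteMeasure (volume.restrict (Ioc a t)) :=
      isFiniteMeasure_restrict.2 measure_Ioc_lt_top.ne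
    have : IsFiniteMeasure (ν.restrict (Ioc a t)) :=
      isFiniteMeasure_restrict.2 measure_Ioc_lt_top.ne
    refine Integrable.of_bound (C := C) ?_ (ae_of_all _ fun p => ?_)
    · exact (Measurable.ite (measurableSet_le measurable_snd measurable_fst) hg
        measurable_const).aestronglyMeasurable
    · dsimp only [Function.uncurry, k]
      split_ifs
      · exact hC _ _
      · simpa using (norm_nonneg _).trans (hC 0 0)
  have hleft : ∀ s ∈ Ioc a t, ∫ v in Ioc a s, g s v ∂ν = ∫ v in Ioc a t, k s v ∂ν := by
    intro s hs
    have hk_eq : ∀ v, k s v = (Iic s).indicator (g s) v := fun v => by simp [k, indicator]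
    simp_rw [hk_eq, setIntegral_indicator measurableSet_Iic, Ioc_inter_Iic, min_eq_right hs.2]
  have hright : ∀ v ∈ Ioc a t, ∫ s in Icc v t, g s v = ∫ s in Ioc a t, k s v := by
    intro v hv
    have hk_eq : ∀ s, k s v = (Ici v).indicator (g · v) s := fun s => by simp [k, indicator]
    have hIcc : Ioc a t ∩ Ici v = Icc v t := by
      ext s
      simp only [mem_inter_iff, mem_Ioc, mem_Ici, mem_Icc]
      exact ⟨fun h => ⟨h.2, h.1.2⟩, fun h => ⟨⟨hv.1.trans_le h.1, h.2⟩, h.1⟩⟩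
    simp_rw [hk_eq, setIntegral_indicator measurableSet_Ici, hIcc]
  rw [setIntegral_congr_fun measurableSet_Ioc hleft, integral_integral_swap hk]
  refine setIntegral_congr_fun measurableSet_Ioc fun v hv => ?_
  exact (hright v hv).symm

theorem StieltjesFunction.measure_Iic_eq_zero (G : StieltjesFunction ℝ) {a : ℝ}
    (hG : ∀ s ≤ a, G s = 0) : G.measure (Iic a) = 0 := by
  have hbot : Tendsto G atBot (𝓝 0) :=
    tendsto_const_nhds.congr' ((eventually_le_atBot a).mono fun s hs => (hG s hs).symm)
  rw [G.measure_Iic hbot, hG a le_rfl, sub_zero, ENNReal.ofReal_zero]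

theorem StieltjesFunction.measureReal_Ioc_of_eq_zero (G : StieltjesFunction ℝ) {a b : ℝ}
    (hab : a ≤ b) (hG : G a = 0) : G.measure.real (Ioc a b) = G b := by
  rw [measureReal_def, G.measure_Ioc, hG, sub_zero,
    ENNReal.toReal_ofReal (hG ▸ G.mono hab)]

theorem intervalIntegral_integral_Iic_comp_sub {f : ℝ → ℝ} (hf : Measurable f) {C : ℝ}
    (hC : ∀ x, ‖f x‖ ≤ C) (G : StieltjesFunction ℝ) (hG : ∀ s ≤ 0, G s = 0) {t : ℝ}
    (ht : 0 ≤ t) :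
    ∫ s in (0:ℝ)..t, ∫ u in Iic s, f (s - u) ∂G.measure = ∫ u in (0:ℝ)..t, f (t - u) * G u := by
  have hIic : ∀ s ∈ Ioc (0:ℝ) t,
      ∫ u in Iic s, f (s - u) ∂G.measure = ∫ u in Ioc 0 s, f (s - u) ∂G.measure := by
    intro s hs
    refine setIntegral_congr_set ?_
    rw [← Iic_union_Ioc_eq_Iic hs.1.le]
    exact union_ae_eq_right.2 (measure_mono_null sdiff_subset (G.measure_Iic_eq_zero hG))
  have hreflect : ∀ v ∈ Ioc (0:ℝ) t, ∫ s in Icc v t, f (s - v) = ∫ u in Icc v t, f (t - u) := by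
    intro v hv
    rw [integral_Icc_eq_integral_Ioc, integral_Icc_eq_integral_Ioc,
      ← intervalIntegral.integral_of_le hv.2, ← intervalIntegral.integral_of_le hv.2,
      intervalIntegral.integral_comp_sub_right, intervalIntegral.integral_comp_sub_left,
      sub_self, sub_self]
  have hmass : ∀ u ∈ Ioc (0:ℝ) t, ∫ _ in Ioc 0 u, f (t - u) ∂G.measure = f (t - u) * G u := by
    intro u hu
    rw [setIntegral_const, smul_eq_mul, G.measureReal_Ioc_of_eq_zero hu.1.le (hG 0 le_rfl),
      mul_comm]
  rw [intervalIntegral.integral_of_le ht, intervalIntegral.integral_of_le ht,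
    setIntegral_congr_fun measurableSet_Ioc hIic,
    integral_Ioc_integral_Ioc_swap (g := fun s v => f (s - v)) _
      (hf.comp (measurable_fst.sub measurable_snd)) (fun _ _ => hC _),
    setIntegral_congr_fun measurableSet_Ioc hreflect,
    ← integral_Ioc_integral_Ioc_swap (g := fun u _ => f (t - u)) _
      (hf.comp (measurable_const.sub measurable_fst)) (fun _ _ => hC _),
    setIntegral_congr_fun measurableSet_Ioc hmass]

theorem intervalIntegral_renewal_identity {f : ℝ → ℝ} (hf : Measurable f) {C : ℝ}
    (hC : ∀ x, ‖f x‖ ≤ C) (G : StieltjesFunction ℝ) (hG : ∀ s ≤ 0, G s = 0) (γ : ℝ) {t : ℝ}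
    (ht : 0 ≤ t) :
    (∫ u in (0:ℝ)..t, f (t - u) * (γ * (1 - G u)))
      + γ * ∫ s in (0:ℝ)..t, ∫ u in Iic s, f (s - u) ∂G.measure
      = γ * ∫ s in (0:ℝ)..t, f s := by
  have hf' : Measurable fun u => f (t - u) := hf.comp (measurable_const.sub measurable_id)
  have hreflect : IntegrableOn (fun u => f (t - u)) (Ioc 0 t) :=
    Measure.integrableOn_of_bounded measure_Ioc_lt_top.ne hf'.aestronglyMeasurable
      (ae_of_all _ fun _ => hC _)
  have hweighted : IntegrableOn (fun u => f (t - u) * G u) (Ioc 0 t) :=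
    ((intervalIntegrable_iff_integrableOn_Ioc_of_le ht).1 G.mono.intervalIntegrable).bdd_mul
      hf'.aestronglyMeasurable (ae_of_all _ fun _ => hC _)
  rw [← intervalIntegrable_iff_integrableOn_Ioc_of_le ht] at hreflect hweighted
  calc (∫ u in (0:ℝ)..t, f (t - u) * (γ * (1 - G u)))
        + γ * ∫ s in (0:ℝ)..t, ∫ u in Iic s, f (s - u) ∂G.measure
      = (∫ u in (0:ℝ)..t, (γ * f (t - u) - γ * (f (t - u) * G u)))
        + γ * ∫ u in (0:ℝ)..t, f (t - u) * G u := by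
        rw [intervalIntegral_integral_Iic_comp_sub hf hC G hG ht]
        congr 1
        exact intervalIntegral.integral_congr fun u _ => by ring
    _ = γ * ∫ u in (0:ℝ)..t, f (t - u) := by
        rw [intervalIntegral.integral_sub (hreflect.const_mul γ) (hweighted.const_mul γ),
          intervalIntegral.integral_const_mul, intervalIntegral.integral_const_mul]
        ring
    _ = γ * ∫ s in (0:ℝ)..t, f s := by
        rw [intervalIntegral.integral_comp_sub_left, sub_self, sub_zero]

theorem exists_intervalIntegral_ne_zero {h : ℝ → ℝ} {a : ℝ} (hne : ∫ x in Ioi a, h x ≠ 0) :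
    ∃ t, a ≤ t ∧ ∫ x in a..t, h x ≠ 0 := by
  have hlim := intervalIntegral_tendsto_integral_Ioi a (Integrable.of_integral_ne_zero hne)
    tendsto_id
  obtain ⟨t, hne_t, hat⟩ := ((hlim.eventually_ne hne).and (eventually_ge_atTop a)).exists
  exact ⟨t, hat, hne_t⟩

theorem intervalIntegral_add_integral_Ioi_eq_inv {h : ℝ → ℝ} {c : ℝ} (hc : c ≠ 0)
    (hmean : ∫ x in Ioi (0:ℝ), h x = c⁻¹) {t : ℝ} (ht : 0 ≤ t) :
    (∫ x in (0:ℝ)..t, h x) + ∫ x in Ioi t, h x = c⁻¹ := by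
  have hi : IntegrableOn h (Ioi 0) := Integrable.of_integral_ne_zero (hmean ▸ inv_ne_zero hc)
  rw [intervalIntegral.integral_interval_add_Ioi hi (hi.mono_set (Ioi_subset_Ioi ht)), hmean]

theorem sirsEquil_iff {lam γ μ : ℝ} (hγ : γ ≠ 0) (hμ : μ ≠ 0) {F : ℝ → ℝ} (hFmono : Monotone F)
    (hF01 : ∀ s, F s ∈ Icc (0:ℝ) 1) (hFmean : ∫ s in Ioi (0:ℝ), (1 - F s) = μ⁻¹)
    {G : StieltjesFunction ℝ} (hGneg : ∀ s ≤ (0:ℝ), G s = 0)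
    (hGmean : ∫ s in Ioi (0:ℝ), (1 - G s) = γ⁻¹) (I R : ℝ) :
    SIRSEquil lam γ μ G F (I, R) ↔
      (∀ t ≥ (0:ℝ), I * (∫ s in (0:ℝ)..t, (1 - G s)) * (lam * (1 - I - R) - γ) = 0) ∧
      (∀ t ≥ (0:ℝ), (γ * I - μ * R) * (∫ s in (0:ℝ)..t, (1 - F s))
        + I * (∫ s in (0:ℝ)..t, ∫ u in Iic s, (1 - F (s - u)) ∂G.measure)
          * (lam * (1 - I - R) - γ) = 0) := by
  have hγγ : γ * γ⁻¹ = 1 := mul_inv_cancel₀ hγ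
  have hμμ : μ * μ⁻¹ = 1 := mul_inv_cancel₀ hμ
  refine and_congr (forall₂_congr fun t ht => ?_) (forall₂_congr fun t ht => ?_)
  · have hsplit := intervalIntegral_add_integral_Ioi_eq_inv hγ hGmean ht
    constructor <;> intro h <;> linear_combination -h - γ * I * hsplit - I * hγγ
  · have hsplit := intervalIntegral_add_integral_Ioi_eq_inv hμ hFmean ht
    have hrenewal := intervalIntegral_renewal_identity (f := fun x => 1 - F x)
      (measurable_const.sub hFmono.measurable) (C := 1)
      (fun x => abs_le.2 ⟨by linarith [(hF01 x).2], by linarith [(hF01 x).1]⟩) G hGneg γ ht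
    beta_reduce at hrenewal
    constructor <;> intro h <;> linear_combination -h - I * hrenewal - μ * R * hsplit - R * hμμ

theorem sirs_balance_iff {lam γ μ I R : ℝ} (hlam : lam ≠ 0) (hγ : 0 < γ) (hμ : 0 < μ) :
    lam * (1 - I - R) = γ ∧ μ * R = γ * I ↔
      (I, R) = ((1 - γ/lam)/(1 + γ/μ), (γ/μ) * ((1 - γ/lam)/(1 + γ/μ))) := by
  have hd : 1 + γ/μ ≠ 0 := by positivity
  rw [Prod.mk.injEq]
  constructor
  · rintro ⟨hS, hR⟩
    have hRI : R = γ/μ * I := by field_simp; linear_combination hR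
    have hS' : 1 - I - R = γ/lam := by rw [eq_div_iff hlam]; linear_combination hS
    have hI : I = (1 - γ/lam)/(1 + γ/μ) := by
      rw [eq_div_iff hd]; linear_combination -hS' - hRI
    exact ⟨hI, hI ▸ hRI⟩
  · rintro ⟨rfl, rfl⟩
    constructor
    · field_simp
      ring
    · field_simp

theorem sirs_equilibrium_general
    (lam γ μ : ℝ) (hγ : 0 < γ) (hμ : 0 < μ) (hlam : γ < lam)
    (F : ℝ → ℝ) (hFmono : Monotone F) (hF01 : ∀ s, F s ∈ Set.Icc (0:ℝ) 1)
    (hFmean : (∫ s in Set.Ioi (0:ℝ), (1 - F s)) = μ⁻¹)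
    (G : StieltjesFunction ℝ) (hGneg : ∀ s ≤ (0:ℝ), G s = 0)
    (hGmean : (∫ s in Set.Ioi (0:ℝ), (1 - G s)) = γ⁻¹) :
    SIRSEquil lam γ μ G F
      ((1 - γ/lam)/(1 + γ/μ), (γ/μ) * ((1 - γ/lam)/(1 + γ/μ))) ∧
    (∀ p : ℝ × ℝ, SIRSEquil lam γ μ G F p → p.1 ≠ 0 →
      p = ((1 - γ/lam)/(1 + γ/μ), (γ/μ) * ((1 - γ/lam)/(1 + γ/μ))) ∧
      lam * (1 - p.1 - p.2) = γ ∧ μ * p.2 = γ * p.1 ∧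
      1 - p.1 - p.2 = γ/lam) := by
  have hlam₀ : lam ≠ 0 := (hγ.trans hlam).ne'
  have hequil := sirsEquil_iff (lam := lam) hγ.ne' hμ.ne' hFmono hF01 hFmean hGneg hGmean
  refine ⟨?_, ?_⟩
  · obtain ⟨hS, hR⟩ := (sirs_balance_iff hlam₀ hγ hμ).2 rfl
    exact (hequil _ _).2 ⟨fun _ _ => by rw [hS, sub_self, mul_zero],
      fun _ _ => by rw [hS, hR, sub_self, sub_self, zero_mul, mul_zero, add_zero]⟩
  rintro ⟨I, R⟩ hp hI
  obtain ⟨hfirst, hsecond⟩ := (hequil I R).1 hp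
  obtain ⟨t₁, ht₁, hB₁⟩ := exists_intervalIntegral_ne_zero (hGmean ▸ inv_ne_zero hγ.ne')
  have hS : lam * (1 - I - R) = γ := by
    simpa [hI, hB₁, sub_eq_zero] using hfirst t₁ ht₁
  obtain ⟨t₂, ht₂, hB₂⟩ := exists_intervalIntegral_ne_zero (hFmean ▸ inv_ne_zero hμ.ne')
  have hR : μ * R = γ * I := by
    simpa [hS, hB₂, sub_eq_zero, eq_comm] using hsecond t₂ ht₂
  exact ⟨(sirs_balance_iff hlam₀ hγ hμ).1 ⟨hS, hR⟩, hS, hR,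
    by rw [eq_div_iff hlam₀]; linear_combination hS⟩

/-- In the SIRS model with independent infectious and immune times, mean infectious
time `γ⁻¹`, mean immune time `μ⁻¹`, `λ > γ`, and equilibrium initial
distributions, the unique nontrivial equilibrium is
`S* = γ/λ`, `I* = (1-γ/λ)/(1+γ/μ)`, `R* = (γ/μ) I*`; in particular
`λ(1 - I* - R*) = γ` and `μ R* = γ I*`. -/
theorem sirs_equilibrium
    (lam γ μ : ℝ) (hγ : 0 < γ) (hμ : 0 < μ) (hlam : γ < lam)
    (F : ℝ → ℝ) (hFmono : Monotone F) (hF01 : ∀ s, F s ∈ Set.Icc (0:ℝ) 1)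
    (hFneg : ∀ s < (0:ℝ), F s = 0)
    (hFmean : (∫ s in Set.Ioi (0:ℝ), (1 - F s)) = μ⁻¹)
    (G : StieltjesFunction ℝ) (hGneg : ∀ s ≤ (0:ℝ), G s = 0) (hG1 : ∀ s, G s ≤ 1)
    (hGmean : (∫ s in Set.Ioi (0:ℝ), (1 - G s)) = γ⁻¹) :
    SIRSEquil lam γ μ G F
      ((1 - γ/lam)/(1 + γ/μ), (γ/μ) * ((1 - γ/lam)/(1 + γ/μ))) ∧
    (∀ p : ℝ × ℝ, SIRSEquil lam γ μ G F p → p.1 ≠ 0 →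
      p = ((1 - γ/lam)/(1 + γ/μ), (γ/μ) * ((1 - γ/lam)/(1 + γ/μ))) ∧
      lam * (1 - p.1 - p.2) = γ ∧ μ * p.2 = γ * p.1 ∧
      1 - p.1 - p.2 = γ/lam) :=
  sirs_equilibrium_general lam γ μ hγ hμ hlam F hFmono hF01 hFmean G hGneg hGmean
end

section
/- For the SIS fluid limit with F₀ = F_e (equilibrium distribution of F, with mean μ⁻¹): a constant I* ∈ [0,1] satisfies I* = I*·μ∫ₜ^∞ Fᶜ(s) ds + λI*(1−I*)∫₀ᵗ Fᶜ(s) ds for all t ≥ 0 if and only if I* = 0 or (when λ > μ) I* = 1 − μ/λ. -/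
open MeasureTheory Set

private lemma split_integral
    (F : ℝ → ℝ)
    (hFint : IntegrableOn (fun s => 1 - F s) (Set.Ioi (0:ℝ)))
    {t : ℝ} (ht : 0 ≤ t) :
    (∫ s in Set.Ioi t, (1 - F s))
      = (∫ s in Set.Ioi (0:ℝ), (1 - F s)) - ∫ s in (0:ℝ)..t, (1 - F s) := by
  have hU : Set.Ioc (0:ℝ) t ∪ Set.Ioi t = Set.Ioi (0:ℝ) := Set.Ioc_union_Ioi_eq_Ioi ht
  have hdisj : Disjoint (Set.Ioc (0:ℝ) t) (Set.Ioi t) := Set.Ioc_disjoint_Ioi le_rfl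
  have h1 : IntegrableOn (fun s => 1 - F s) (Set.Ioc (0:ℝ) t) :=
    hFint.mono_set (by rw [← hU]; exact Set.subset_union_left)
  have h2 : IntegrableOn (fun s => 1 - F s) (Set.Ioi t) :=
    hFint.mono_set (by rw [← hU]; exact Set.subset_union_right)
  have := MeasureTheory.setIntegral_union hdisj measurableSet_Ioi h1 h2
  rw [hU] at this
  rw [intervalIntegral.integral_of_le ht, this]
  ring

/-- Characterization of the equilibria of the SIS fluid limit with equilibrium
initial distribution `F₀ = F_e`: a constant `I* ∈ [0,1]` satisfies
`I* = I* μ ∫ₜ^∞ Fᶜ + λ I*(1-I*) ∫₀ᵗ Fᶜ` for all `t ≥ 0` iff `I* = 0` or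
(`λ > μ` and) `I* = 1 - μ/λ`. -/
theorem sis_equilibrium
    (lam μ : ℝ) (hlam : 0 < lam) (hμ : 0 < μ)
    (F : ℝ → ℝ) (hFmono : Monotone F) (hF01 : ∀ s, F s ∈ Set.Icc (0:ℝ) 1)
    (hFneg : ∀ s < (0:ℝ), F s = 0)
    (hFint : IntegrableOn (fun s => 1 - F s) (Set.Ioi (0:ℝ)))
    (hFmean : (∫ s in Set.Ioi (0:ℝ), (1 - F s)) = μ⁻¹)
    (Istar : ℝ) (hI01 : Istar ∈ Set.Icc (0:ℝ) 1) :
    (∀ t ≥ (0:ℝ),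
      Istar = Istar * (μ * ∫ s in Set.Ioi t, (1 - F s))
        + lam * Istar * (1 - Istar) * (∫ s in (0:ℝ)..t, (1 - F s)))
    ↔ (Istar = 0 ∨ (μ < lam ∧ Istar = 1 - μ / lam)) := by
  constructor
  · intro H
    by_cases hI0 : Istar = 0
    · exact Or.inl hI0
    · right
      -- find t with B(t) > 0
      have htend : Filter.Tendsto (fun t => ∫ s in (0:ℝ)..t, (1 - F s))
          Filter.atTop (nhds μ⁻¹) := by
        rw [← hFmean]
        exact MeasureTheory.intervalIntegral_tendsto_integral_Ioi 0 hFint Filter.tendsto_id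
      have hpos : ∀ᶠ t in Filter.atTop, (0:ℝ) < ∫ s in (0:ℝ)..t, (1 - F s) :=
        htend.eventually (eventually_gt_nhds (by positivity))
      obtain ⟨t, hBpos, ht0⟩ := (hpos.and (Filter.eventually_ge_atTop (0:ℝ))).exists
      have hsplit := split_integral F hFint ht0
      have hEq := H t ht0
      rw [hsplit, hFmean, mul_sub, mul_inv_cancel₀ (ne_of_gt hμ)] at hEq
      -- Istar = Istar*(1 - μ*B) + lam*Istar*(1-Istar)*B
      set B := ∫ s in (0:ℝ)..t, (1 - F s) with hB
      have hkey : Istar * B * (lam * (1 - Istar) - μ) = 0 := by nlinarith [hEq]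
      have h2 : Istar * (lam * (1 - Istar) - μ) = 0 := by
        rcases mul_eq_zero.1 hkey with h | h
        · rcases mul_eq_zero.1 h with h' | h'
          · exact absurd h' hI0
          · exact absurd h' (by positivity)
        · simp [h]
      have h3 : lam * (1 - Istar) = μ := by
        rcases mul_eq_zero.1 h2 with h | h
        · exact absurd h hI0
        · linarith
      have hIeq : Istar = 1 - μ / lam := by
        field_simp at h3 ⊢
        linarith
      refine ⟨?_, hIeq⟩
      have hIpos : 0 < Istar := lt_of_le_of_ne hI01.1 (Ne.symm hI0)
      rw [hIeq] at hIpos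
      have : μ / lam < 1 := by linarith
      calc μ = (μ / lam) * lam := by field_simp
        _ < 1 * lam := by exact mul_lt_mul_of_pos_right this hlam
        _ = lam := one_mul lam
  · intro H t ht
    have hsplit := split_integral F hFint ht
    rw [hsplit, hFmean, mul_sub, mul_inv_cancel₀ (ne_of_gt hμ)]
    set B := ∫ s in (0:ℝ)..t, (1 - F s)
    rcases H with h0 | ⟨hμlam, hIeq⟩
    · rw [h0]; ring
    · rw [hIeq]
      have hlam' : lam ≠ 0 := ne_of_gt hlam
      field_simp
      ring
end

section
/- Let θ : [0,∞) → ℝ be locally integrable, μ > 0, and let W₁ be a mean-zero Gaussian process with Cov(W₁(t),W₁(t')) = ∫₀^{t∧t'} θ(r) dr. Define Ĩ(t) := −μ∫₀ᵗ e^{−μ(t−s)} W₁(s) ds + W₁(t). Then for s < t, Cov(Ĩ(t), Ĩ(s)) = e^{−μ(t−s)} ∫₀ˢ e^{−2μ(s−r)} θ(r) dr. -/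
open MeasureTheory Set

lemma exp_int (μ : ℝ) (hμ : μ ≠ 0) (x u : ℝ) :
    ∫ r in u..x, Real.exp (-μ * (x - r)) = (1 - Real.exp (-μ * (x - u))) / μ := by
  have hderiv : ∀ r ∈ Set.uIcc u x,
      HasDerivAt (fun r => Real.exp (-μ * (x - r)) / μ) (Real.exp (-μ * (x - r))) r := by
    intro r _
    have h1 : HasDerivAt (fun r : ℝ => -μ * (x - r)) μ r := by
      simpa using ((hasDerivAt_id r).const_sub x).const_mul (-μ)
    have := (h1.exp).div_const μ
    simpa [mul_div_assoc, mul_div_cancel_right₀ _ hμ] using this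
  have hint : IntervalIntegrable (fun r => Real.exp (-μ * (x - r))) volume u x :=
    (Real.continuous_exp.comp (by continuity)).intervalIntegrable u x
  rw [intervalIntegral.integral_eq_sub_of_hasDerivAt hderiv hint]
  simp [sub_div]

lemma swap_min (f c : ℝ → ℝ) (b T : ℝ) (hb : 0 ≤ b) (hbT : b ≤ T)
    (hf : IntegrableOn f (Ioc 0 b)) (hc : Continuous c) :
    (∫ r in (0:ℝ)..T, c r * ∫ u in (0:ℝ)..(min r b), f u)
      = ∫ u in (0:ℝ)..b, f u * ∫ r in u..T, c r := by
  have hT : (0:ℝ) ≤ T := hb.trans hbT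
  set S : Set (ℝ × ℝ) := {p | p.2 ≤ p.1} with hSdef
  have hS : MeasurableSet S := measurableSet_le measurable_snd measurable_fst
  set g : ℝ × ℝ → ℝ := S.indicator (fun p => c p.1 * f p.2) with hgdef
  have hgint : Integrable g ((volume.restrict (Ioc 0 T)).prod (volume.restrict (Ioc 0 b))) := by
    apply Integrable.indicator _ hS
    exact Integrable.mul_prod (hc.integrableOn_Icc.mono_set Ioc_subset_Icc_self) hf
  have step1 : (∫ r in (0:ℝ)..T, c r * ∫ u in (0:ℝ)..(min r b), f u)
      = ∫ r in Ioc (0:ℝ) T, ∫ u in Ioc (0:ℝ) b, g (r, u) := by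
    rw [intervalIntegral.integral_of_le hT]
    apply setIntegral_congr_fun measurableSet_Ioc
    intro r hr
    dsimp only
    have hfun : (fun u => g (r, u)) = (Iic r).indicator (fun u => c r * f u) := by
      ext u
      by_cases h : u ≤ r <;> simp [hgdef, hSdef, Set.indicator, h]
    rw [hfun, setIntegral_indicator measurableSet_Iic, Set.Ioc_inter_Iic,
      integral_const_mul]
    congr 1
    rw [intervalIntegral.integral_of_le (le_min hr.1.le hb), min_comm]
  rw [step1, MeasureTheory.integral_integral_swap (f := fun r u => g (r, u)) hgint,
    intervalIntegral.integral_of_le hb]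
  apply setIntegral_congr_fun measurableSet_Ioc
  intro u hu
  dsimp only
  have hfun : (fun r => g (r, u)) = (Ici u).indicator (fun r => c r * f u) := by
    ext r
    by_cases h : u ≤ r <;> simp [hgdef, hSdef, Set.indicator, h]
  rw [hfun, setIntegral_indicator measurableSet_Ici]
  have hset : Ioc (0:ℝ) T ∩ Ici u = Icc u T := by
    ext r
    constructor
    · rintro ⟨⟨_, h2⟩, h3⟩; exact ⟨h3, h2⟩
    · rintro ⟨h1, h2⟩; exact ⟨⟨lt_of_lt_of_le hu.1 h1, h2⟩, h1⟩
  rw [hset, integral_Icc_eq_integral_Ioc, integral_mul_const, mul_comm,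
    intervalIntegral.integral_of_le (hu.2.trans hbT)]

lemma indic_min (θ : ℝ → ℝ) (r r' s : ℝ) (hr : 0 ≤ r) (h0 : 0 ≤ r') (h1 : r' ≤ s) :
    (∫ u in (0:ℝ)..(min r r'), θ u)
      = ∫ u in (0:ℝ)..(min r' s), (Ioc 0 r).indicator θ u := by
  rw [min_eq_left h1, intervalIntegral.integral_of_le (le_min hr h0),
    intervalIntegral.integral_of_le h0, integral_indicator measurableSet_Ioc,
    Measure.restrict_restrict measurableSet_Ioc, Set.Ioc_inter_Ioc]
  congr 2
  simp [min_comm]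

/-- Covariance identity for the Ornstein–Uhlenbeck-type transform of a process
with independent increments: with `C(u,v) = ∫₀^{u∧v} θ(r) dr`, for `s < t`,
`C(t,s) - μ∫₀ˢ e^{-μ(s-r')} C(t,r') dr' - μ∫₀ᵗ e^{-μ(t-r)} C(r,s) dr
 + μ²∫₀ᵗ∫₀ˢ e^{-μ(t-r)} e^{-μ(s-r')} C(r,r') dr' dr
 = e^{-μ(t-s)} ∫₀ˢ e^{-2μ(s-r)} θ(r) dr`. -/
theorem ou_covariance_identity
    (θ : ℝ → ℝ) (hθ : LocallyIntegrable θ)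
    (μ : ℝ) (hμ : 0 < μ) (s t : ℝ) (hs : 0 ≤ s) (hst : s < t) :
    (∫ r in (0:ℝ)..(min t s), θ r)
      - μ * (∫ r' in (0:ℝ)..s,
          Real.exp (-μ * (s - r')) * (∫ u in (0:ℝ)..(min t r'), θ u))
      - μ * (∫ r in (0:ℝ)..t,
          Real.exp (-μ * (t - r)) * (∫ u in (0:ℝ)..(min r s), θ u))
      + μ ^ 2 * (∫ r in (0:ℝ)..t, (∫ r' in (0:ℝ)..s,
          Real.exp (-μ * (t - r)) * Real.exp (-μ * (s - r'))
            * (∫ u in (0:ℝ)..(min r r'), θ u)))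
    = Real.exp (-μ * (t - s)) * ∫ r in (0:ℝ)..s, Real.exp (-2 * μ * (s - r)) * θ r := by
  have hμ0 : μ ≠ 0 := hμ.ne'
  have hst' : s ≤ t := hst.le
  have ht : (0:ℝ) ≤ t := hs.trans hst'
  have hθIcc : IntegrableOn θ (Icc 0 s) := hθ.integrableOn_isCompact isCompact_Icc
  have hθs : IntegrableOn θ (Ioc 0 s) := hθIcc.mono_set Ioc_subset_Icc_self
  have J1 : IntervalIntegrable θ volume 0 s :=
    (intervalIntegrable_iff_integrableOn_Ioc_of_le hs).2 hθs
  have Jmul : ∀ g : ℝ → ℝ, Continuous g →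
      IntervalIntegrable (fun u => θ u * g u) volume 0 s :=
    fun g hg => J1.mul_continuousOn hg.continuousOn
  -- term 1
  have h1 : (∫ r in (0:ℝ)..(min t s), θ r) = ∫ u in (0:ℝ)..s, θ u := by
    rw [min_eq_right hst']
  -- term 2
  have h2 : (∫ r' in (0:ℝ)..s,
        Real.exp (-μ * (s - r')) * (∫ u in (0:ℝ)..(min t r'), θ u))
      = ∫ u in (0:ℝ)..s, θ u * ((1 - Real.exp (-μ * (s - u))) / μ) := by
    have e1 : (∫ r' in (0:ℝ)..s,
          Real.exp (-μ * (s - r')) * (∫ u in (0:ℝ)..(min t r'), θ u))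
        = ∫ r' in (0:ℝ)..s,
          Real.exp (-μ * (s - r')) * (∫ u in (0:ℝ)..(min r' s), θ u) := by
      apply intervalIntegral.integral_congr
      intro r' hr'
      rw [uIcc_of_le hs] at hr'
      dsimp only
      rw [min_eq_right (hr'.2.trans hst'), min_eq_left hr'.2]
    rw [e1, swap_min θ (fun r' => Real.exp (-μ * (s - r'))) s s hs le_rfl hθs (by fun_prop)]
    apply intervalIntegral.integral_congr
    intro u _
    dsimp only
    rw [exp_int μ hμ0 s u]
  -- term 3
  have h3 : (∫ r in (0:ℝ)..t,
        Real.exp (-μ * (t - r)) * (∫ u in (0:ℝ)..(min r s), θ u))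
      = ∫ u in (0:ℝ)..s, θ u * ((1 - Real.exp (-μ * (t - u))) / μ) := by
    rw [swap_min θ (fun r => Real.exp (-μ * (t - r))) s t hs hst' hθs (by fun_prop)]
    apply intervalIntegral.integral_congr
    intro u _
    dsimp only
    rw [exp_int μ hμ0 t u]
  -- term 4
  have hφ : IntegrableOn (fun u => θ u * ((1 - Real.exp (-μ * (s - u))) / μ)) (Ioc 0 s) :=
    (hθIcc.mul_continuousOn (Continuous.continuousOn (by fun_prop))
      isCompact_Icc).mono_set Ioc_subset_Icc_self
  have h4 : (∫ r in (0:ℝ)..t, (∫ r' in (0:ℝ)..s,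
        Real.exp (-μ * (t - r)) * Real.exp (-μ * (s - r'))
          * (∫ u in (0:ℝ)..(min r r'), θ u)))
      = ∫ u in (0:ℝ)..s, θ u *
          (((1 - Real.exp (-μ * (s - u))) / μ) * ((1 - Real.exp (-μ * (t - u))) / μ)) := by
    have e1 : (∫ r in (0:ℝ)..t, (∫ r' in (0:ℝ)..s,
          Real.exp (-μ * (t - r)) * Real.exp (-μ * (s - r'))
            * (∫ u in (0:ℝ)..(min r r'), θ u)))
        = ∫ r in (0:ℝ)..t, Real.exp (-μ * (t - r)) *
            ∫ u in (0:ℝ)..(min r s),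
              (fun u => θ u * ((1 - Real.exp (-μ * (s - u))) / μ)) u := by
      apply intervalIntegral.integral_congr
      intro r hr
      rw [uIcc_of_le ht] at hr
      dsimp only
      have inner1 : (∫ r' in (0:ℝ)..s,
            Real.exp (-μ * (t - r)) * Real.exp (-μ * (s - r'))
              * (∫ u in (0:ℝ)..(min r r'), θ u))
          = Real.exp (-μ * (t - r)) * ∫ r' in (0:ℝ)..s,
              Real.exp (-μ * (s - r')) * (∫ u in (0:ℝ)..(min r' s), (Ioc 0 r).indicator θ u) := by
        rw [← intervalIntegral.integral_const_mul]
        apply intervalIntegral.integral_congr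
        intro r' hr'
        rw [uIcc_of_le hs] at hr'
        dsimp only
        rw [mul_assoc, indic_min θ r r' s hr.1 hr'.1 hr'.2]
      rw [inner1, swap_min ((Ioc 0 r).indicator θ) (fun r' => Real.exp (-μ * (s - r'))) s s
        hs le_rfl (hθs.indicator measurableSet_Ioc) (by fun_prop)]
      congr 1
      have e2 : (∫ u in (0:ℝ)..s, (Ioc 0 r).indicator θ u *
            ∫ r' in u..s, Real.exp (-μ * (s - r')))
          = ∫ u in (0:ℝ)..s, (Ioc 0 r).indicator
              (fun u => θ u * ((1 - Real.exp (-μ * (s - u))) / μ)) u := by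
        apply intervalIntegral.integral_congr
        intro u _
        dsimp only
        rw [exp_int μ hμ0 s u]
        by_cases h : u ∈ Ioc 0 r <;> simp [h]
      rw [e2, intervalIntegral.integral_of_le hs, integral_indicator measurableSet_Ioc,
        Measure.restrict_restrict measurableSet_Ioc, Set.Ioc_inter_Ioc,
        intervalIntegral.integral_of_le (le_min hr.1 hs)]
      congr 2
      simp [min_comm]
    rw [e1, swap_min _ (fun r => Real.exp (-μ * (t - r))) s t hs hst' hφ (by fun_prop)]
    apply intervalIntegral.integral_congr
    intro u _
    dsimp only
    rw [exp_int μ hμ0 t u, mul_assoc]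
  rw [h1, h2, h3, h4]
  have J2 : IntervalIntegrable (fun u => μ * (θ u * ((1 - Real.exp (-μ * (s - u))) / μ)))
      volume 0 s := (Jmul _ (by fun_prop)).const_mul μ
  have J3 : IntervalIntegrable (fun u => μ * (θ u * ((1 - Real.exp (-μ * (t - u))) / μ)))
      volume 0 s := (Jmul _ (by fun_prop)).const_mul μ
  have J4 : IntervalIntegrable (fun u => μ ^ 2 * (θ u *
      (((1 - Real.exp (-μ * (s - u))) / μ) * ((1 - Real.exp (-μ * (t - u))) / μ))))
      volume 0 s := (Jmul _ (by fun_prop)).const_mul (μ ^ 2)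
  rw [← intervalIntegral.integral_const_mul μ, ← intervalIntegral.integral_const_mul μ,
    ← intervalIntegral.integral_const_mul (μ ^ 2),
    ← intervalIntegral.integral_const_mul (Real.exp (-μ * (t - s))),
    ← intervalIntegral.integral_sub J1 J2, ← intervalIntegral.integral_sub (J1.sub J2) J3,
    ← intervalIntegral.integral_add ((J1.sub J2).sub J3) J4]
  apply intervalIntegral.integral_congr
  intro u _
  dsimp only
  have key : Real.exp (-μ * (s - u)) * Real.exp (-μ * (t - u))
      = Real.exp (-μ * (t - s)) * Real.exp (-2 * μ * (s - u)) := by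
    rw [← Real.exp_add, ← Real.exp_add]
    ring_nf
  have expand : θ u - μ * (θ u * ((1 - Real.exp (-μ * (s - u))) / μ))
      - μ * (θ u * ((1 - Real.exp (-μ * (t - u))) / μ))
      + μ ^ 2 * (θ u * (((1 - Real.exp (-μ * (s - u))) / μ)
          * ((1 - Real.exp (-μ * (t - u))) / μ)))
      = θ u * (Real.exp (-μ * (s - u)) * Real.exp (-μ * (t - u))) := by
    field_simp
    ring
  rw [expand, key]
  ring
end

section
/- Let F be a c.d.f. on ℝ₊, λ > 0, and S̄, Ī : [0,T] → [0,1] measurable. Define for t, t' ≥ 0 the function c(t,t') = λ∫₀^{t∧t'} F(t∧t'−s) S̄(s)Ī(s) ds (the covariance of R̂₁). Then for all t, δ ≥ 0, c(t+δ, t+δ) − 2c(t+δ, t) + c(t,t) ≤ 2λδ + 2λ∫₀ᵗ (F(t+δ−s) − F(t−s)) ds ≤ 2λδ + 2λδ = 4λδ·max(1,λ). -/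
open MeasureTheory Set

/-- A measurable function bounded between 0 and 1 is interval integrable. -/
lemma bdd01_intervalIntegrable {f : ℝ → ℝ} (hf : Measurable f)
    (h0 : ∀ x, 0 ≤ f x) (h1 : ∀ x, f x ≤ 1) (a b : ℝ) :
    IntervalIntegrable f MeasureTheory.volume a b := by
  apply IntervalIntegrable.mono_fun (intervalIntegrable_const (c := (1:ℝ)))
    hf.aestronglyMeasurable
  filter_upwards with x
  simp only [Real.norm_eq_abs, abs_of_nonneg (h0 x), abs_one]
  exact h1 x

/-- The covariance function of the Gaussian limit `R̂₁`:
`c(t,t') = λ ∫₀^{t∧t'} F(t∧t' - s) S̄(s) Ī(s) ds`. -/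
noncomputable def covR (lam : ℝ) (F S I : ℝ → ℝ) (t t' : ℝ) : ℝ :=
  lam * ∫ s in (0:ℝ)..(min t t'), F (min t t' - s) * (S s * I s)

/-- Increment bound for the covariance of `R̂₁`:
`c(t+δ,t+δ) - 2c(t+δ,t) + c(t,t) ≤ 2λδ + 2λ∫₀ᵗ(F(t+δ-s) - F(t-s)) ds
  ≤ 4λδ·max(1,λ)`. -/
theorem covR_increment_bound
    (lam : ℝ) (hlam : 0 < lam)
    (F : ℝ → ℝ) (hFmono : Monotone F) (hF01 : ∀ s, F s ∈ Set.Icc (0:ℝ) 1)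
    (hFneg : ∀ s < (0:ℝ), F s = 0)
    (S I : ℝ → ℝ) (hS : Measurable S) (hI : Measurable I)
    (hS01 : ∀ s, S s ∈ Set.Icc (0:ℝ) 1) (hI01 : ∀ s, I s ∈ Set.Icc (0:ℝ) 1)
    (t δ : ℝ) (ht : 0 ≤ t) (hδ : 0 ≤ δ) :
    covR lam F S I (t + δ) (t + δ) - 2 * covR lam F S I (t + δ) t + covR lam F S I t t
      ≤ 2 * lam * δ + 2 * lam * (∫ s in (0:ℝ)..t, (F (t + δ - s) - F (t - s))) ∧
    2 * lam * δ + 2 * lam * (∫ s in (0:ℝ)..t, (F (t + δ - s) - F (t - s)))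
      ≤ 4 * lam * δ * max 1 lam := by
  have hFm : Measurable F := hFmono.measurable
  have hSI : Measurable (fun s => S s * I s) := hS.mul hI
  have hSI0 : ∀ s, 0 ≤ S s * I s := fun s => mul_nonneg (hS01 s).1 (hI01 s).1
  have hSI1 : ∀ s, S s * I s ≤ 1 := fun s =>
    mul_le_one₀ (hS01 s).2 (hI01 s).1 (hI01 s).2
  set g : ℝ → ℝ := fun s => F (t + δ - s) * (S s * I s) with hg
  set h : ℝ → ℝ := fun s => F (t - s) * (S s * I s) with hh
  have hgm : Measurable g := (hFm.comp (measurable_const.sub measurable_id)).mul hSI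
  have hhm : Measurable h := (hFm.comp (measurable_const.sub measurable_id)).mul hSI
  have hg0 : ∀ x, 0 ≤ g x := fun x => mul_nonneg (hF01 _).1 (hSI0 x)
  have hg1 : ∀ x, g x ≤ 1 := fun x =>
    mul_le_one₀ (hF01 _).2 (hSI0 x) (hSI1 x)
  have hh0 : ∀ x, 0 ≤ h x := fun x => mul_nonneg (hF01 _).1 (hSI0 x)
  have hh1 : ∀ x, h x ≤ 1 := fun x =>
    mul_le_one₀ (hF01 _).2 (hSI0 x) (hSI1 x)
  have hgint : ∀ a b : ℝ, IntervalIntegrable g volume a b :=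
    bdd01_intervalIntegrable hgm hg0 hg1
  have hhint : ∀ a b : ℝ, IntervalIntegrable h volume a b :=
    bdd01_intervalIntegrable hhm hh0 hh1
  have hFint : ∀ a b : ℝ, IntervalIntegrable F volume a b :=
    bdd01_intervalIntegrable hFm (fun x => (hF01 x).1) (fun x => (hF01 x).2)
  have hFcint : ∀ c a b : ℝ, IntervalIntegrable (fun s => F (c - s)) volume a b := by
    intro c a b
    apply bdd01_intervalIntegrable
    · exact hFm.comp (measurable_const.sub measurable_id)
    · exact fun x => (hF01 _).1
    · exact fun x => (hF01 _).2
  -- rewrite covR values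
  have hmin1 : min (t + δ) (t + δ) = t + δ := min_self _
  have hmin2 : min (t + δ) t = t := min_eq_right (by linarith)
  have hmin3 : min t t = t := min_self _
  have hA : covR lam F S I (t + δ) (t + δ) = lam * ∫ s in (0:ℝ)..(t+δ), g s := by
    simp [covR, hmin1, hg]
  have hB : covR lam F S I (t + δ) t = lam * ∫ s in (0:ℝ)..t, h s := by
    simp [covR, hmin2, hh]
  have hC : covR lam F S I t t = lam * ∫ s in (0:ℝ)..t, h s := by
    simp [covR, hmin3, hh]
  have hsplit : (∫ s in (0:ℝ)..(t+δ), g s)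
      = (∫ s in (0:ℝ)..t, g s) + ∫ s in t..(t+δ), g s :=
    (intervalIntegral.integral_add_adjacent_intervals (hgint 0 t) (hgint t (t+δ))).symm
  have htail : (∫ s in t..(t+δ), g s) ≤ δ := by
    calc (∫ s in t..(t+δ), g s) ≤ ∫ s in t..(t+δ), (1:ℝ) :=
          intervalIntegral.integral_mono_on (by linarith) (hgint t (t+δ))
            intervalIntegrable_const (fun x _ => hg1 x)
      _ = δ := by simp
  have hdiff_nonneg : ∀ s, 0 ≤ F (t + δ - s) - F (t - s) := fun s =>
    sub_nonneg.2 (hFmono (by linarith))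
  have hmid : (∫ s in (0:ℝ)..t, g s) - (∫ s in (0:ℝ)..t, h s)
      ≤ ∫ s in (0:ℝ)..t, (F (t + δ - s) - F (t - s)) := by
    rw [← intervalIntegral.integral_sub (hgint 0 t) (hhint 0 t)]
    apply intervalIntegral.integral_mono_on ht ((hgint 0 t).sub (hhint 0 t))
      ((hFcint (t+δ) 0 t).sub (hFcint t 0 t))
    intro x _
    have : g x - h x = (F (t + δ - x) - F (t - x)) * (S x * I x) := by ring
    rw [this]
    exact mul_le_of_le_one_right (hdiff_nonneg x) (hSI1 x)
  have hint_nonneg : 0 ≤ ∫ s in (0:ℝ)..t, (F (t + δ - s) - F (t - s)) :=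
    intervalIntegral.integral_nonneg ht (fun x _ => hdiff_nonneg x)
  constructor
  · rw [hA, hB, hC, hsplit]
    have h1 : lam * ((∫ s in (0:ℝ)..t, g s) + (∫ s in t..(t+δ), g s))
        - 2 * (lam * ∫ s in (0:ℝ)..t, h s) + lam * ∫ s in (0:ℝ)..t, h s
        = lam * ((∫ s in t..(t+δ), g s)
            + ((∫ s in (0:ℝ)..t, g s) - (∫ s in (0:ℝ)..t, h s))) := by ring
    rw [h1]
    have hb : (∫ s in t..(t+δ), g s)
        + ((∫ s in (0:ℝ)..t, g s) - (∫ s in (0:ℝ)..t, h s))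
        ≤ δ + ∫ s in (0:ℝ)..t, (F (t + δ - s) - F (t - s)) := add_le_add htail hmid
    nlinarith [mul_le_mul_of_nonneg_left hb hlam.le]
  · -- second inequality: ∫₀ᵗ (F(t+δ-s) - F(t-s)) ds ≤ δ
    have hsub : (∫ s in (0:ℝ)..t, (F (t + δ - s) - F (t - s)))
        = (∫ s in (0:ℝ)..t, F (t + δ - s)) - ∫ s in (0:ℝ)..t, F (t - s) := by
      exact intervalIntegral.integral_sub (hFcint (t+δ) 0 t) (hFcint t 0 t)
    have h1 : (∫ s in (0:ℝ)..t, F (t + δ - s)) = ∫ u in δ..(t+δ), F u := by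
      rw [intervalIntegral.integral_comp_sub_left (a := 0) (b := t) F (t + δ)]
      norm_num
    have h2 : (∫ s in (0:ℝ)..t, F (t - s)) = ∫ u in (0:ℝ)..t, F u := by
      rw [intervalIntegral.integral_comp_sub_left (a := 0) (b := t) F t]
      norm_num
    have hsplit1 : (∫ u in δ..(t+δ), F u)
        = (∫ u in δ..t, F u) + ∫ u in t..(t+δ), F u :=
      (intervalIntegral.integral_add_adjacent_intervals (hFint δ t) (hFint t (t+δ))).symm
    have hsplit2 : (∫ u in (0:ℝ)..t, F u)
        = (∫ u in (0:ℝ)..δ, F u) + ∫ u in δ..t, F u :=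
      (intervalIntegral.integral_add_adjacent_intervals (hFint 0 δ) (hFint δ t)).symm
    have htail2 : (∫ u in t..(t+δ), F u) ≤ δ := by
      calc (∫ u in t..(t+δ), F u) ≤ ∫ u in t..(t+δ), (1:ℝ) :=
            intervalIntegral.integral_mono_on (by linarith) (hFint t (t+δ))
              intervalIntegrable_const (fun x _ => (hF01 x).2)
        _ = δ := by simp
    have hhead : 0 ≤ ∫ u in (0:ℝ)..δ, F u :=
      intervalIntegral.integral_nonneg hδ (fun x _ => (hF01 x).1)
    have key : (∫ s in (0:ℝ)..t, (F (t + δ - s) - F (t - s))) ≤ δ := by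
      rw [hsub, h1, h2, hsplit1, hsplit2]; linarith
    have h4 : 4 * lam * δ ≤ 4 * lam * δ * max 1 lam :=
      le_mul_of_one_le_right (by positivity) (le_max_left 1 lam)
    nlinarith [mul_le_mul_of_nonneg_left key (by linarith : (0:ℝ) ≤ 2 * lam)]
end

section
/- Let F be a c.d.f. on ℝ₊ and G a c.d.f. on ℝ₊, and for t, δ ≥ 0 set D(t,δ) = ∫₀ᵗ (Φ(t+δ−s) − Φ(t−s)) ds where Φ(t) = ∫₀ᵗ F(t−u) dG(u). Then Φ(t+δ−s) − Φ(t−s) = ∫_{t−s}^{t+δ−s} F(t+δ−s−u) dG(u) + ∫₀^{t−s} (F(t+δ−s−u) − F(t−s−u)) dG(u), and consequently D(t,δ) ≤ 2δ. -/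
open MeasureTheory Set Filter Topology

/-!
The increment identity is additivity of the `dG`-integral over
`Iic (t - s) ∪ Ioc (t - s) (t + δ - s)`. For the bound, `F (x - u) = 0` for `u > x`, so
`Φ(x) = ∫ F (x - u) dG(u)` over all of `ℝ`. After Fubini, for fixed `u` the `ds`-integral of the
increment of `F` telescopes to `∫_{x}^{x+δ} F - ∫_{x-t}^{x-t+δ} F ≤ δ`, and `dG` has total mass
at most `1`; so even `D(t,δ) ≤ δ`.
-/

lemma StieltjesFunction.measure_univ_le (G : StieltjesFunction ℝ) {l c : ℝ}
    (hl : Tendsto G atBot (𝓝 l)) (hc : ∀ x, G x ≤ c) :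
    G.measure univ ≤ ENNReal.ofReal (c - l) :=
  le_of_tendsto' (tendsto_measure_Iic_atTop _) fun x => by
    rw [G.measure_Iic hl]
    exact ENNReal.ofReal_le_ofReal (by linarith [hc x])

lemma setIntegral_Iic_sub_setIntegral_Iic {E : Type*} [NormedAddCommGroup E]
    [NormedSpace ℝ E] {μ : Measure ℝ} {f g : ℝ → E} {a b : ℝ} (hab : a ≤ b)
    (hf : IntegrableOn f (Iic b) μ) (hg : IntegrableOn g (Iic a) μ) :
    (∫ u in Iic b, f u ∂μ) - ∫ u in Iic a, g u ∂μ
      = (∫ u in Ioc a b, f u ∂μ) + ∫ u in Iic a, (f u - g u) ∂μ := by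
  have hf' : IntegrableOn f (Iic a) μ := hf.mono_set (Iic_subset_Iic.2 hab)
  have hsplit :
      ∫ u in Iic b, f u ∂μ = (∫ u in Iic a, f u ∂μ) + ∫ u in Ioc a b, f u ∂μ := by
    rw [← setIntegral_union (Iic_disjoint_Ioc le_rfl) measurableSet_Ioc hf'
      (hf.mono_set Ioc_subset_Iic_self), Iic_union_Ioc_eq_Iic hab]
  rw [hsplit, integral_sub hf' hg]
  abel

lemma setIntegral_Iic_comp_sub {E : Type*} [NormedAddCommGroup E] [NormedSpace ℝ E]
    {μ : Measure ℝ} {f : ℝ → E} (hf : ∀ x < 0, f x = 0) (c : ℝ) :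
    ∫ u in Iic c, f (c - u) ∂μ = ∫ u, f (c - u) ∂μ :=
  setIntegral_eq_integral_of_forall_compl_eq_zero fun _ hu =>
    hf _ (sub_neg.2 (not_le.1 hu))

section UnitInterval

variable {F : ℝ → ℝ}

lemma integrable_comp_sub_of_mem_Icc {μ : Measure ℝ} [IsFiniteMeasure μ] (hF : Measurable F)
    (hF01 : ∀ x, F x ∈ Icc (0 : ℝ) 1) (c : ℝ) : Integrable (fun u => F (c - u)) μ :=
  .of_bound (hF.comp (measurable_const.sub measurable_id)).aestronglyMeasurable 1 <|
    .of_forall fun _ => by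
      rw [Real.norm_of_nonneg (hF01 _).1]
      exact (hF01 _).2

lemma Monotone.intervalIntegral_increment_eq (hF : Monotone F) (x δ t : ℝ) :
    ∫ s in (0 : ℝ)..t, (F (x + δ - s) - F (x - s))
      = (∫ y in x..x + δ, F y) - ∫ y in x - t..x - t + δ, F y := by
  have hI : ∀ a b : ℝ, IntervalIntegrable F volume a b := fun _ _ => hF.intervalIntegrable
  rw [intervalIntegral.integral_sub, intervalIntegral.integral_comp_sub_left F (x + δ),
    intervalIntegral.integral_comp_sub_left F x, sub_zero, sub_zero,
    ← intervalIntegral.integral_add_adjacent_intervals (hI (x + δ - t) x) (hI x (x + δ)),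
    ← intervalIntegral.integral_add_adjacent_intervals (hI (x - t) (x - t + δ)) (hI _ x)]
  · ring_nf
  · exact (hF.comp_antitone fun _ _ h => by linarith).intervalIntegrable
  · exact (hF.comp_antitone fun _ _ h => by linarith).intervalIntegrable

lemma Monotone.intervalIntegral_increment_le (hF : Monotone F) (hF01 : ∀ x, F x ∈ Icc (0 : ℝ) 1)
    {δ : ℝ} (hδ : 0 ≤ δ) (x t : ℝ) : ∫ s in (0 : ℝ)..t, (F (x + δ - s) - F (x - s)) ≤ δ := by
  have hupper : ∫ y in x..x + δ, F y ≤ δ := by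
    simpa using intervalIntegral.integral_mono_on (by linarith)
      (hF.intervalIntegrable (μ := volume) (a := x) (b := x + δ))
      intervalIntegrable_const fun y _ => (hF01 y).2
  have hlower : 0 ≤ ∫ y in x - t..x - t + δ, F y :=
    intervalIntegral.integral_nonneg (by linarith) fun y _ => (hF01 y).1
  rw [hF.intervalIntegral_increment_eq]
  linarith

lemma Monotone.intervalIntegral_integral_increment_le {ν : Measure ℝ} [IsFiniteMeasure ν]
    (hF : Monotone F) (hF01 : ∀ x, F x ∈ Icc (0 : ℝ) 1) {δ : ℝ} (hδ : 0 ≤ δ) (t : ℝ) :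
    ∫ s in (0 : ℝ)..t, ∫ u, (F (t + δ - s - u) - F (t - s - u)) ∂ν ≤ δ * ν.real univ := by
  have hFm : Measurable F := hF.measurable
  have : IsFiniteMeasure (volume.restrict (uIoc 0 t)) :=
    Real.isFiniteMeasure_restrict_Ioc _ _
  have hint : Integrable (Function.uncurry fun s u => F (t + δ - s - u) - F (t - s - u))
      ((volume.restrict (uIoc 0 t)).prod ν) :=
    .of_bound (by fun_prop) 1 <| .of_forall fun _ =>
      (dist_eq_norm _ _).symm.trans_le (Real.dist_le_of_mem_Icc_01 (hF01 _) (hF01 _))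
  rw [intervalIntegral_integral_swap hint]
  calc _ ≤ ∫ _, δ ∂ν := by
        refine integral_mono ?_ (integrable_const δ) fun u => ?_
        · simp_rw [intervalIntegral.intervalIntegral_eq_integral_uIoc]
          exact hint.integral_prod_right.smul (if (0 : ℝ) ≤ t then (1 : ℝ) else -1)
        · simpa only [sub_right_comm _ _ u, add_sub_right_comm t δ u]
            using hF.intervalIntegral_increment_le hF01 hδ (t - u) t
    _ = δ * ν.real univ := by rw [integral_const, smul_eq_mul, mul_comm]

end UnitInterval

theorem phi_increment_bound_general
    (F : ℝ → ℝ) (hFmono : Monotone F) (hF01 : ∀ s, F s ∈ Set.Icc (0:ℝ) 1)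
    (hFneg : ∀ s < (0:ℝ), F s = 0)
    (G : StieltjesFunction ℝ) (hGneg : ∀ s ≤ (0:ℝ), G s = 0) (hG1 : ∀ s, G s ≤ 1)
    (t δ : ℝ) (hδ : 0 ≤ δ) :
    (∀ s ∈ Set.Icc (0:ℝ) t,
      (∫ u in Set.Iic (t + δ - s), F (t + δ - s - u) ∂G.measure)
          - (∫ u in Set.Iic (t - s), F (t - s - u) ∂G.measure)
        = (∫ u in Set.Ioc (t - s) (t + δ - s), F (t + δ - s - u) ∂G.measure)
          + (∫ u in Set.Iic (t - s),
              (F (t + δ - s - u) - F (t - s - u)) ∂G.measure)) ∧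
    (∫ s in (0:ℝ)..t,
      ((∫ u in Set.Iic (t + δ - s), F (t + δ - s - u) ∂G.measure)
        - (∫ u in Set.Iic (t - s), F (t - s - u) ∂G.measure))) ≤ 2 * δ := by
  have hGbot : Tendsto G atBot (𝓝 0) :=
    tendsto_const_nhds.congr' ((eventually_le_atBot 0).mono fun s hs => (hGneg s hs).symm)
  have hmass := G.measure_univ_le hGbot hG1
  have : IsFiniteMeasure G.measure := ⟨hmass.trans_lt ENNReal.ofReal_lt_top⟩
  have hint := integrable_comp_sub_of_mem_Icc (μ := G.measure) hFmono.measurable hF01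
  refine ⟨fun s _ => setIntegral_Iic_sub_setIntegral_Iic (by linarith) (hint _).integrableOn
    (hint _).integrableOn, ?_⟩
  simp_rw [setIntegral_Iic_comp_sub hFneg, ← integral_sub (hint _) (hint _)]
  calc _ ≤ δ * G.measure.real univ := hFmono.intervalIntegral_integral_increment_le hF01 hδ t
    _ ≤ δ * 1 := by
      gcongr
      simpa [measureReal_def] using ENNReal.toReal_le_of_le_ofReal (by norm_num) hmass
    _ ≤ 2 * δ := by linarith

/-- Decomposition and bound for increments of `Φ(t) = ∫ F(t-u) dG(u)`:
`Φ(t+δ-s) - Φ(t-s)` splits into the integral over `(t-s, t+δ-s]` plus the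
integral of the increment of `F` over `(-∞, t-s]`, and
`D(t,δ) = ∫₀ᵗ (Φ(t+δ-s) - Φ(t-s)) ds ≤ 2δ`. -/
theorem phi_increment_bound
    (F : ℝ → ℝ) (hFmono : Monotone F) (hF01 : ∀ s, F s ∈ Set.Icc (0:ℝ) 1)
    (hFneg : ∀ s < (0:ℝ), F s = 0)
    (G : StieltjesFunction ℝ) (hGneg : ∀ s ≤ (0:ℝ), G s = 0) (hG1 : ∀ s, G s ≤ 1)
    (t δ : ℝ) (ht : 0 ≤ t) (hδ : 0 ≤ δ) :
    (∀ s ∈ Set.Icc (0:ℝ) t,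
      (∫ u in Set.Iic (t + δ - s), F (t + δ - s - u) ∂G.measure)
          - (∫ u in Set.Iic (t - s), F (t - s - u) ∂G.measure)
        = (∫ u in Set.Ioc (t - s) (t + δ - s), F (t + δ - s - u) ∂G.measure)
          + (∫ u in Set.Iic (t - s),
              (F (t + δ - s - u) - F (t - s - u)) ∂G.measure)) ∧
    (∫ s in (0:ℝ)..t,
      ((∫ u in Set.Iic (t + δ - s), F (t + δ - s - u) ∂G.measure)
        - (∫ u in Set.Iic (t - s), F (t - s - u) ∂G.measure))) ≤ 2 * δ :=
  phi_increment_bound_general F hFmono hF01 hFneg G hGneg hG1 t δ hδ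
end
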